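/- arXiv:1310.0981 — 13 statements merged into one kernel-verified Lean document; each statement's English description precedes it below -/
import Mathlib

section
/- Let m ≥ 1 be an integer, α ∈ ℂ, λ ∈ ℂ with λ ≠ 0, and let f : ℤ → ℂ satisfy f(n) ≠ 0 and f(n) ≠ α for all n. Define u(n) = (f(n) − α)·∏_{s=1}^{m} f(n+s) and ũ(n) = (f(n+m) − α)·∏_{s=0}^{m−1} f(n+s). If ψ : ℤ → ℂ satisfies ψ(n−1) − u(n)·ψ(n+m) = λ·ψ(n) for all n ∈ ℤ, then the function ψ̃(n) := (1/(f(n) − α))·((α/λ)·ψ(n−1) − f(n)·ψ(n)) satisfies ψ̃(n−1) − ũ(n)·ψ̃(n+m) = λ·ψ̃(n) for all n ∈ ℤ. -/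
/-!
Write `P n = f(n) ⋯ f(n+m-1)`, so that `u n = (f n - α) P (n+1)` and `ũ n = (f (n+m) - α) P n`.
Eliminating `ψ (n-1)` by the linear problem turns the definition of `ψ̃` into
`ψ̃ n = -ψ n + (α/λ) P (n+1) ψ (n+m)`, which no longer divides by `f - α`.
With this at `n - 1` and `n`, and the definition itself at `n + m`, the linear problem for `ψ̃`
reduces to the one for `ψ` through the telescoping identity `P (n+1) f n = P n f (n+m)`.
-/

open Finset

theorem Finset.prod_range_shift_mul {M : Type*} [CommMonoid M] (f : ℤ → M) (n : ℤ) (m : ℕ) :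
    (∏ s ∈ range m, f (n + s + 1)) * f n = (∏ s ∈ range m, f (n + s)) * f (n + m) := by
  calc (∏ s ∈ range m, f (n + s + 1)) * f n = ∏ s ∈ range (m + 1), f (n + s) := by
        rw [prod_range_succ']
        push_cast
        simp only [add_assoc, add_zero]
    _ = (∏ s ∈ range m, f (n + s)) * f (n + m) := prod_range_succ _ _

theorem darboux_eq_neg_add_of_eq {K : Type*} [Field K] {α lam x Q a b c : K}
    (hx : x ≠ α) (hlam : lam ≠ 0) (h : a - (x - α) * Q * c = lam * b) :
    1 / (x - α) * (α / lam * a - x * b) = -b + α / lam * Q * c := by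
  have hx' : x - α ≠ 0 := sub_ne_zero.mpr hx
  field_simp
  linear_combination α * h

theorem darboux_bogoyavlensky_general
    (m : ℕ) (α lam : ℂ) (hlam : lam ≠ 0)
    (f : ℤ → ℂ) (hfα : ∀ n : ℤ, f n ≠ α)
    (u u' : ℤ → ℂ)
    (hu : ∀ n : ℤ, u n = (f n - α) * ∏ s ∈ Finset.range m, f (n + s + 1))
    (hu' : ∀ n : ℤ, u' n = (f (n + m) - α) * ∏ s ∈ Finset.range m, f (n + s))
    (ψ : ℤ → ℂ)
    (hψ : ∀ n : ℤ, ψ (n - 1) - u n * ψ (n + m) = lam * ψ n)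
    (ψ' : ℤ → ℂ)
    (hψ' : ∀ n : ℤ, ψ' n = (1 / (f n - α)) * ((α / lam) * ψ (n - 1) - f n * ψ n)) :
    ∀ n : ℤ, ψ' (n - 1) - u' n * ψ' (n + m) = lam * ψ' n := by
  intro n
  set P : ℤ → ℂ := fun n ↦ ∏ s ∈ range m, f (n + s)
  have hP : ∀ n, ∏ s ∈ range m, f (n + s + 1) = P (n + 1) := fun n ↦
    prod_congr rfl fun s _ ↦ by rw [add_right_comm]
  have hψ'_eq : ∀ n, ψ' n = -ψ n + α / lam * P (n + 1) * ψ (n + m) := fun n ↦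
    (hψ' n).trans <| darboux_eq_neg_add_of_eq (hfα n) hlam <| by rw [← hP, ← hu]; exact hψ n
  have hψ'_top : (f (n + m) - α) * ψ' (n + m) = α / lam * ψ (n - 1 + m) - f (n + m) * ψ (n + m) := by
    rw [hψ', ← mul_assoc, mul_one_div_cancel (sub_ne_zero.mpr (hfα _)), one_mul, add_sub_right_comm]
  have hψ'_bot := hψ'_eq (n - 1)
  rw [sub_add_cancel] at hψ'_bot
  have hun := hu n
  have htel := prod_range_shift_mul f n m
  rw [hP] at hun htel
  rw [hψ'_bot, hψ'_eq n, hu' n]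
  linear_combination -P n * hψ'_top - hψ n - ψ (n + m) * hun - ψ (n + m) * htel
    - P (n + 1) * ψ (n + m) * mul_div_cancel₀ α hlam

/-- Darboux transformation for the discrete linear problem
`ψ_{-1} - u ψ_m = λ ψ` associated with the Bogoyavlensky lattice. -/
theorem darboux_bogoyavlensky
    (m : ℕ) (hm : 1 ≤ m) (α lam : ℂ) (hlam : lam ≠ 0)
    (f : ℤ → ℂ) (hf0 : ∀ n : ℤ, f n ≠ 0) (hfα : ∀ n : ℤ, f n ≠ α)
    (u u' : ℤ → ℂ)
    (hu : ∀ n : ℤ, u n = (f n - α) * ∏ s ∈ Finset.range m, f (n + s + 1))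
    (hu' : ∀ n : ℤ, u' n = (f (n + m) - α) * ∏ s ∈ Finset.range m, f (n + s))
    (ψ : ℤ → ℂ)
    (hψ : ∀ n : ℤ, ψ (n - 1) - u n * ψ (n + m) = lam * ψ n)
    (ψ' : ℤ → ℂ)
    (hψ' : ∀ n : ℤ, ψ' n = (1 / (f n - α)) * ((α / lam) * ψ (n - 1) - f n * ψ n)) :
    ∀ n : ℤ, ψ' (n - 1) - u' n * ψ' (n + m) = lam * ψ' n :=
  darboux_bogoyavlensky_general m α lam hlam f hfα u u' hu hu' ψ hψ ψ' hψ'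
end

section
/- Let m ≥ 1 be an integer, α, λ ∈ ℂ with α ≠ 0, λ ≠ 0, and let f : ℤ → ℂ satisfy f(n) ≠ α for all n. Define μ = α^m/λ^m − λ/α, and the operators acting on functions ψ : ℤ → ℂ: (Lψ)(n) = ψ(n−1) − u(n)·ψ(n+m) where u(n) = (f(n) − α)·∏_{s=1}^{m} f(n+s); (Aψ)(n) = (1/(f(n) − α))·((α/λ)·ψ(n−1) − f(n)·ψ(n)); (Y^k ψ)(n) = (λ/α)^k·(∏_{t=0}^{k−1} f(n+t))·ψ(n+k) for k ≥ 0; and (Bψ)(n) = (λ/α)·ψ(n) + (α/λ)^{m−1}·(f(n) − α)·Σ_{k=0}^{m−1} (Y^k ψ)(n+1). Then for every function ψ : ℤ → ℂ and every n ∈ ℤ, (B((f − α)·(Aψ)))(n) = (Lψ)(n) − λ·ψ(n) + μ·(f(n) − α)·ψ(n), where (f − α)·ψ denotes the pointwise product n ↦ (f(n) − α)·ψ(n). -/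
/-!
With `r = α/λ` and `Y = (λ/α) f T`, the operator `(f - α) A` factors as `r (1 - Y) T⁻¹`, so the
sum `∑_{k<m} Y^k` in `B` telescopes by the geometric series identity to `r (1 - Y^m) T⁻¹`.
What remains is an identity between finitely many values of `ψ`, which follows from
`(λ/α)(α/λ) = 1` by ring arithmetic.
-/

open Finset

section WeightedShift

variable {K : Type*} [CommRing K]

def weightedShift (c : K) (f : ℤ → K) : Module.End K (ℤ → K) where
  toFun ψ n := c * f n * ψ (n + 1)
  map_add' ψ χ := by ext n; simp [mul_add]
  map_smul' a ψ := by ext n; simp; ring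

@[simp]
theorem weightedShift_apply (c : K) (f : ℤ → K) (ψ : ℤ → K) (n : ℤ) :
    weightedShift c f ψ n = c * f n * ψ (n + 1) :=
  rfl

theorem weightedShift_pow_apply (c : K) (f : ℤ → K) (k : ℕ) (ψ : ℤ → K) (n : ℤ) :
    (weightedShift c f ^ k) ψ n = c ^ k * (∏ t ∈ range k, f (n + t)) * ψ (n + k) := by
  induction k generalizing n with
  | zero => simp
  | succ k ih =>
    rw [pow_succ', Module.End.mul_apply, weightedShift_apply, ih, prod_range_succ']
    push_cast
    simp only [add_zero, add_assoc, add_comm (1 : ℤ)]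
    ring

theorem sum_pow_apply_one_sub {R M : Type*} [Ring R] [AddCommGroup M] [Module R M]
    (Y : Module.End R M) (m : ℕ) (χ : M) :
    ∑ k ∈ range m, (Y ^ k) ((1 - Y) χ) = (1 - Y ^ m) χ := by
  rw [← geom_sum_mul_neg, Module.End.mul_apply, LinearMap.sum_apply]

theorem sum_weightedShift_pow_one_sub_apply (c : K) (f : ℤ → K) (m : ℕ) (χ : ℤ → K) (n : ℤ) :
    ∑ k ∈ range m, (weightedShift c f ^ k) ((1 - weightedShift c f) χ) n
      = χ n - c ^ m * (∏ t ∈ range m, f (n + t)) * χ (n + m) := by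
  rw [← Finset.sum_apply, sum_pow_apply_one_sub, LinearMap.sub_apply, Pi.sub_apply,
    Module.End.one_apply, weightedShift_pow_apply]

theorem sum_weightedShift_pow_apply_of_mul_eq_one {c r : K} (hcr : c * r = 1) (f ψ : ℤ → K)
    (m : ℕ) (n : ℤ) :
    ∑ k ∈ range m, (weightedShift c f ^ k) (fun j => r * ψ (j - 1) - f j * ψ j) n
      = r * (ψ (n - 1) - c ^ m * (∏ t ∈ range m, f (n + t)) * ψ (n + m - 1)) := by
  have hfactor : (fun j => r * ψ (j - 1) - f j * ψ j)
      = r • (1 - weightedShift c f) (fun j => ψ (j - 1)) := by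
    ext j
    simp only [Pi.smul_apply, LinearMap.sub_apply, Pi.sub_apply, Module.End.one_apply,
      weightedShift_apply, add_sub_cancel_right, smul_eq_mul]
    linear_combination f j * ψ j * hcr
  simp only [hfactor, map_smul, Pi.smul_apply, smul_eq_mul, ← mul_sum,
    sum_weightedShift_pow_one_sub_apply]

end WeightedShift

theorem bogoyavlensky_operator_identity_first_general
    (m : ℕ) (α lam : ℂ) (hα : α ≠ 0) (hlam : lam ≠ 0)
    (f : ℤ → ℂ) (hf : ∀ n : ℤ, f n ≠ α)
    (μ : ℂ) (hμ : μ = α ^ m / lam ^ m - lam / α)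
    (u : ℤ → ℂ)
    (hu : ∀ n : ℤ, u n = (f n - α) * ∏ s ∈ Finset.range m, f (n + s + 1))
    (L A B : (ℤ → ℂ) → (ℤ → ℂ))
    (Y : ℕ → (ℤ → ℂ) → (ℤ → ℂ))
    (hL : ∀ (ψ : ℤ → ℂ) (n : ℤ), L ψ n = ψ (n - 1) - u n * ψ (n + m))
    (hA : ∀ (ψ : ℤ → ℂ) (n : ℤ),
      A ψ n = (1 / (f n - α)) * ((α / lam) * ψ (n - 1) - f n * ψ n))
    (hY : ∀ (k : ℕ) (ψ : ℤ → ℂ) (n : ℤ),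
      Y k ψ n = (lam / α) ^ k * (∏ t ∈ Finset.range k, f (n + t)) * ψ (n + k))
    (hB : ∀ (ψ : ℤ → ℂ) (n : ℤ),
      B ψ n = (lam / α) * ψ n
        + (α / lam) ^ (m - 1) * (f n - α) * ∑ k ∈ Finset.range m, Y k ψ (n + 1)) :
    ∀ (ψ : ℤ → ℂ) (n : ℤ),
      B (fun j => (f j - α) * A ψ j) n
        = L ψ n - lam * ψ n + μ * (f n - α) * ψ n := by
  intro ψ n
  have hqr : lam / α * (α / lam) = 1 := by field_simp
  have hfA : ∀ j, (f j - α) * A ψ j = α / lam * ψ (j - 1) - f j * ψ j := fun j => by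
    rw [hA, one_div, mul_inv_cancel_left₀ (sub_ne_zero.mpr (hf j))]
  have hYW : ∀ k χ, Y k χ = (weightedShift (lam / α) f ^ k) χ := fun k χ =>
    funext fun j => by rw [hY, weightedShift_pow_apply]
  have hsum : (α / lam) ^ (m - 1) * ∑ k ∈ range m, Y k (fun j => (f j - α) * A ψ j) (n + 1)
      = (α / lam) ^ m * (ψ n - (lam / α) ^ m * (∏ t ∈ range m, f (n + 1 + t)) * ψ (n + m)) := by
    simp only [hYW, hfA, sum_weightedShift_pow_apply_of_mul_eq_one hqr, add_sub_cancel_right,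
      add_sub_right_comm]
    -- for `m = 0` both sides vanish, since the bracket is `ψ n - ψ n`
    rcases m with _ | m
    · simp
    · rw [Nat.add_sub_cancel]; ring
  have hprod : ∏ s ∈ range m, f (n + s + 1) = ∏ t ∈ range m, f (n + 1 + t) :=
    prod_congr rfl fun s _ => by rw [add_right_comm]
  have hqα : lam / α * α = lam := by field_simp
  have hqrm : (lam / α) ^ m * (α / lam) ^ m = 1 := by rw [← mul_pow, hqr, one_pow]
  rw [hB, mul_right_comm _ (f n - α), hsum, hfA, hL, hu, hprod, hμ, ← div_pow]
  linear_combination ψ (n - 1) * hqr - ψ n * hqα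
    - (f n - α) * (∏ t ∈ range m, f (n + 1 + t)) * ψ (n + m) * hqrm

/-- The first operator identity `B · (f - α) A = L - λ + μ (f - α)` used in the proof
of the Darboux transformation for the Bogoyavlensky lattice. -/
theorem bogoyavlensky_operator_identity_first
    (m : ℕ) (hm : 1 ≤ m) (α lam : ℂ) (hα : α ≠ 0) (hlam : lam ≠ 0)
    (f : ℤ → ℂ) (hf : ∀ n : ℤ, f n ≠ α)
    (μ : ℂ) (hμ : μ = α ^ m / lam ^ m - lam / α)
    (u : ℤ → ℂ)
    (hu : ∀ n : ℤ, u n = (f n - α) * ∏ s ∈ Finset.range m, f (n + s + 1))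
    (L A B : (ℤ → ℂ) → (ℤ → ℂ))
    (Y : ℕ → (ℤ → ℂ) → (ℤ → ℂ))
    (hL : ∀ (ψ : ℤ → ℂ) (n : ℤ), L ψ n = ψ (n - 1) - u n * ψ (n + m))
    (hA : ∀ (ψ : ℤ → ℂ) (n : ℤ),
      A ψ n = (1 / (f n - α)) * ((α / lam) * ψ (n - 1) - f n * ψ n))
    (hY : ∀ (k : ℕ) (ψ : ℤ → ℂ) (n : ℤ),
      Y k ψ n = (lam / α) ^ k * (∏ t ∈ Finset.range k, f (n + t)) * ψ (n + k))
    (hB : ∀ (ψ : ℤ → ℂ) (n : ℤ),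
      B ψ n = (lam / α) * ψ n
        + (α / lam) ^ (m - 1) * (f n - α) * ∑ k ∈ Finset.range m, Y k ψ (n + 1)) :
    ∀ (ψ : ℤ → ℂ) (n : ℤ),
      B (fun j => (f j - α) * A ψ j) n
        = L ψ n - lam * ψ n + μ * (f n - α) * ψ n :=
  bogoyavlensky_operator_identity_first_general m α lam hα hlam f hf μ hμ u hu L A B Y hL hA hY hB
end

section
/- Let m ≥ 1 be an integer, α, λ ∈ ℂ with α ≠ 0, λ ≠ 0, and let f : ℤ → ℂ satisfy f(n) ≠ α for all n. Define μ = α^m/λ^m − λ/α, and the operators acting on functions ψ : ℤ → ℂ: (L̃ψ)(n) = ψ(n−1) − ũ(n)·ψ(n+m) where ũ(n) = (f(n+m) − α)·∏_{s=0}^{m−1} f(n+s); (Aψ)(n) = (1/(f(n) − α))·((α/λ)·ψ(n−1) − f(n)·ψ(n)); (Y^k ψ)(n) = (λ/α)^k·(∏_{t=0}^{k−1} f(n+t))·ψ(n+k) for k ≥ 0; and (Bψ)(n) = (λ/α)·ψ(n) + (α/λ)^{m−1}·(f(n) − α)·Σ_{k=0}^{m−1} (Y^k ψ)(n+1). Then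 for every function ψ : ℤ → ℂ and every n ∈ ℤ, ((f − α)·A((1/(f − α))·B((f − α)·ψ)))(n) = (L̃ψ)(n) − λ·ψ(n) + μ·(f(n) − α)·ψ(n), where products of a function of n with ψ are pointwise. -/
/-!
Put `Y = (λ/α) f T` and `Σ = 1 + Y + ⋯ + Y^(m-1)`. Then `(1/(f-α)) B (f-α) = λ/α + (α/λ)^(m-1) T Σ (f-α)`,
and applying `(f-α) A = (α/λ) T⁻¹ - f` gives
`T⁻¹ - (λ/α) f + (α/λ)^m Σ (f-α) - (α/λ)^(m-1) f T Σ (f-α)`.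
Since `f T = (α/λ) Y`, the telescoping identity `Y Σ + 1 = Σ + Y^m` turns the last term into
`-(α/λ)^m (Σ + Y^m - 1) (f-α)`: the `Σ` terms cancel, `Y^m (f-α) = (λ/α)^m ũ T^m` gives the `ũ` term,
and the rest is `-λ + μ (f-α)`. For `m = 0` the truncated exponent `m - 1` is harmless, as `Σ = 0`.
-/

open Finset

section MulShiftPow

variable {R : Type*} [CommSemiring R]

/-- `mulShiftPow r f k ψ = (r f T)^k ψ`, where `T` is the unit shift `(T ψ) n = ψ (n + 1)`. -/
def mulShiftPow (r : R) (f : ℤ → R) (k : ℕ) (ψ : ℤ → R) (n : ℤ) : R :=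
  r ^ k * (∏ t ∈ range k, f (n + t)) * ψ (n + k)

@[simp]
lemma mulShiftPow_zero (r : R) (f ψ : ℤ → R) (n : ℤ) : mulShiftPow r f 0 ψ n = ψ n := by
  simp [mulShiftPow]

lemma mulShiftPow_succ (r : R) (f ψ : ℤ → R) (k : ℕ) (n : ℤ) :
    mulShiftPow r f (k + 1) ψ n = r * (f n * mulShiftPow r f k ψ (n + 1)) := by
  simp only [mulShiftPow, prod_range_succ', Nat.cast_add, Nat.cast_one, Nat.cast_zero, add_zero,
    pow_succ, add_assoc, add_comm (1 : ℤ)]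
  ring

lemma mul_sum_mulShiftPow_add (r : R) (f ψ : ℤ → R) (m : ℕ) (n : ℤ) :
    r * (f n * ∑ k ∈ range m, mulShiftPow r f k ψ (n + 1)) + ψ n
      = ∑ k ∈ range m, mulShiftPow r f k ψ n + mulShiftPow r f m ψ n := by
  simp only [mul_sum, ← mulShiftPow_succ]
  rw [← sum_range_succ, sum_range_succ', mulShiftPow_zero]

lemma mul_pow_pred_mul_sum_range (c : R) (g : ℕ → R) (m : ℕ) :
    c * (c ^ (m - 1) * ∑ k ∈ range m, g k) = c ^ m * ∑ k ∈ range m, g k := by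
  cases m with
  | zero => simp
  | succ m => rw [Nat.add_sub_cancel, ← mul_assoc, ← pow_succ']

lemma pow_pred_mul_sum_mulShiftPow_add {c r : R} (hcr : c * r = 1) (f ψ : ℤ → R) (m : ℕ)
    (n : ℤ) :
    c ^ (m - 1) * (f n * ∑ k ∈ range m, mulShiftPow r f k ψ (n + 1)) + c ^ m * ψ n
      = c ^ m * (∑ k ∈ range m, mulShiftPow r f k ψ n + mulShiftPow r f m ψ n) := by
  rw [← mul_sum_mulShiftPow_add, mul_add]
  cases m with
  | zero => simp
  | succ m =>
    rw [Nat.add_sub_cancel, pow_succ, mul_assoc (c ^ m) c (r * _), ← mul_assoc c r, hcr, one_mul]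

end MulShiftPow

theorem bogoyavlensky_operator_identity_second_general
    (m : ℕ) (α lam : ℂ) (hα : α ≠ 0) (hlam : lam ≠ 0)
    (f : ℤ → ℂ) (hf : ∀ n : ℤ, f n ≠ α)
    (μ : ℂ) (hμ : μ = α ^ m / lam ^ m - lam / α)
    (u' : ℤ → ℂ)
    (hu' : ∀ n : ℤ, u' n = (f (n + m) - α) * ∏ s ∈ Finset.range m, f (n + s))
    (L' A B : (ℤ → ℂ) → (ℤ → ℂ))
    (Y : ℕ → (ℤ → ℂ) → (ℤ → ℂ))
    (hL' : ∀ (ψ : ℤ → ℂ) (n : ℤ), L' ψ n = ψ (n - 1) - u' n * ψ (n + m))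
    (hA : ∀ (ψ : ℤ → ℂ) (n : ℤ),
      A ψ n = (1 / (f n - α)) * ((α / lam) * ψ (n - 1) - f n * ψ n))
    (hY : ∀ (k : ℕ) (ψ : ℤ → ℂ) (n : ℤ),
      Y k ψ n = (lam / α) ^ k * (∏ t ∈ Finset.range k, f (n + t)) * ψ (n + k))
    (hB : ∀ (ψ : ℤ → ℂ) (n : ℤ),
      B ψ n = (lam / α) * ψ n
        + (α / lam) ^ (m - 1) * (f n - α) * ∑ k ∈ Finset.range m, Y k ψ (n + 1)) :
    ∀ (ψ : ℤ → ℂ) (n : ℤ),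
      (f n - α) *
          A (fun j => (1 / (f j - α)) * B (fun i => (f i - α) * ψ i) j) n
        = L' ψ n - lam * ψ n + μ * (f n - α) * ψ n := by
  intro ψ n
  obtain rfl : Y = mulShiftPow (lam / α) f := funext fun k => funext fun ψ => funext (hY k ψ)
  set φ : ℤ → ℂ := fun i => (f i - α) * ψ i
  set S : ℤ → ℂ := fun j => ∑ k ∈ range m, mulShiftPow (lam / α) f k φ j
  have hcr : α / lam * (lam / α) = 1 := by field_simp
  have hconj : ∀ j, 1 / (f j - α) * B φ j
      = lam / α * ψ j + (α / lam) ^ (m - 1) * S (j + 1) := by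
    intro j
    have hfj := sub_ne_zero.mpr (hf j)
    simp only [hB, φ, S]
    field_simp
  have hcm : (α / lam) ^ m * (lam / α) ^ m = 1 := by rw [← mul_pow, hcr, one_pow]
  have hrα : lam / α * α = lam := div_mul_cancel₀ lam hα
  have hshift := mul_pow_pred_mul_sum_range (α / lam) (fun k => mulShiftPow (lam / α) f k φ n) m
  have htel := pow_pred_mul_sum_mulShiftPow_add hcr f φ m n
  rw [hA, hconj, hconj, sub_add_cancel, ← mul_assoc, mul_one_div_cancel (sub_ne_zero.mpr (hf n)),
    one_mul, hL', hu', hμ, ← div_pow]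
  simp only [S, φ, mulShiftPow] at hshift htel ⊢
  linear_combination hshift - htel + ψ (n - 1) * hcr - hrα * ψ n
    - (f (n + m) - α) * (∏ t ∈ range m, f (n + t)) * ψ (n + m) * hcm

/-- The second operator identity `(f-α) A (1/(f-α)) B (f-α) = L̃ - λ + μ (f-α)` used in
the proof of the Darboux transformation for the Bogoyavlensky lattice. -/
theorem bogoyavlensky_operator_identity_second
    (m : ℕ) (hm : 1 ≤ m) (α lam : ℂ) (hα : α ≠ 0) (hlam : lam ≠ 0)
    (f : ℤ → ℂ) (hf : ∀ n : ℤ, f n ≠ α)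
    (μ : ℂ) (hμ : μ = α ^ m / lam ^ m - lam / α)
    (u' : ℤ → ℂ)
    (hu' : ∀ n : ℤ, u' n = (f (n + m) - α) * ∏ s ∈ Finset.range m, f (n + s))
    (L' A B : (ℤ → ℂ) → (ℤ → ℂ))
    (Y : ℕ → (ℤ → ℂ) → (ℤ → ℂ))
    (hL' : ∀ (ψ : ℤ → ℂ) (n : ℤ), L' ψ n = ψ (n - 1) - u' n * ψ (n + m))
    (hA : ∀ (ψ : ℤ → ℂ) (n : ℤ),
      A ψ n = (1 / (f n - α)) * ((α / lam) * ψ (n - 1) - f n * ψ n))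
    (hY : ∀ (k : ℕ) (ψ : ℤ → ℂ) (n : ℤ),
      Y k ψ n = (lam / α) ^ k * (∏ t ∈ Finset.range k, f (n + t)) * ψ (n + k))
    (hB : ∀ (ψ : ℤ → ℂ) (n : ℤ),
      B ψ n = (lam / α) * ψ n
        + (α / lam) ^ (m - 1) * (f n - α) * ∑ k ∈ Finset.range m, Y k ψ (n + 1)) :
    ∀ (ψ : ℤ → ℂ) (n : ℤ),
      (f n - α) *
          A (fun j => (1 / (f j - α)) * B (fun i => (f i - α) * ψ i) j) n
        = L' ψ n - lam * ψ n + μ * (f n - α) * ψ n :=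
  bogoyavlensky_operator_identity_second_general m α lam hα hlam f hf μ hμ u' hu' L' A B Y hL' hA hY
    hB
end

section
/- Let m ≥ 1 be an integer and α ∈ ℂ. Let f : ℝ × ℤ → ℂ be differentiable in the first (time) variable and satisfy the modified Bogoyavlensky lattice ∂_t f(t,n) = f(t,n)·(f(t,n) − α)·(∏_{s=1}^{m} f(t,n+s) − ∏_{s=1}^{m} f(t,n−s)) for all t and n. Then the function u(t,n) := (f(t,n) − α)·∏_{s=1}^{m} f(t,n+s) satisfies the Bogoyavlensky lattice ∂_t u(t,n) = u(t,n)·(Σ_{s=1}^{m} u(t,n+s) − Σ_{s=1}^{m} u(t,n−s)) for all t and n. -/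
/-!
Write `P_a = f_a ⋯ f_{a+m-1}` and `Q_a = f_a ⋯ f_{a+m}` at a fixed time, so that
`u_n = (f_n - α) P_{n+1}` and the modified lattice says `∂_t f_j = f_j v_j` with
`v_j = (f_j - α)(P_{j+1} - P_{j-m}) = u_j - (f_j - α) P_{j-m}`. By the Leibniz rule
`∂_t u_n = u_n (f_n (P_{n+1} - P_{n-m}) + v_{n+1} + ⋯ + v_{n+m})`. The identity
`(f_j - α) P_{j-m} - u_{j-m-1} = Q_{j-m} - Q_{j-m-1}` makes
`∑_{k=1}^m ((f_{n+k} - α) P_{n+k-m} - u_{n+k-m-1})` telescope to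
`Q_n - Q_{n-m} = f_n (P_{n+1} - P_{n-m})`, which turns the bracket into
`∑_{k=1}^m u_{n+k} - ∑_{k=1}^m u_{n-k}`.
-/

open Finset

theorem prod_range_sub_sub_one {M : Type*} [CommMonoid M] (g : ℤ → M) (n : ℤ) (m : ℕ) :
    ∏ s ∈ range m, g (n - s - 1) = ∏ s ∈ range m, g (n - m + s) := by
  rw [← prod_range_reflect (fun s => g (n - m + s)) m]
  refine prod_congr rfl fun s hs => congrArg g ?_
  have : s < m := mem_range.mp hs
  omega

theorem sum_range_sub_sub_one {M : Type*} [AddCommMonoid M] (g : ℤ → M) (n : ℤ) (m : ℕ) :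
    ∑ s ∈ range m, g (n - s - 1) = ∑ s ∈ range m, g (n - m + s) := by
  rw [← sum_range_reflect (fun s => g (n - m + s)) m]
  refine sum_congr rfl fun s hs => congrArg g ?_
  have : s < m := mem_range.mp hs
  omega

theorem HasDerivAt.fun_finsetProd_of_eq_mul {ι 𝕜 𝔸 : Type*} [DecidableEq ι]
    [NontriviallyNormedField 𝕜] [NormedCommRing 𝔸] [NormedAlgebra 𝕜 𝔸] {u : Finset ι}
    {g : ι → 𝕜 → 𝔸} {h : ι → 𝔸} {x : 𝕜}
    (hg : ∀ i ∈ u, HasDerivAt (g i) (g i x * h i) x) :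
    HasDerivAt (fun y => ∏ i ∈ u, g i y) ((∏ i ∈ u, g i x) * ∑ i ∈ u, h i) x := by
  refine (HasDerivAt.fun_finsetProd hg).congr_deriv ?_
  rw [mul_sum]
  refine sum_congr rfl fun i hi => ?_
  rw [smul_eq_mul, ← mul_prod_erase u (g · x) hi]
  ring

section WindowProd

variable {M : Type*} [CommMonoid M] (F : ℤ → M) (m : ℕ)

/-- In the paper's notation `f_m ⋯ f_1` is `windowProd f m (n + 1)` and `f_{-1} ⋯ f_{-m}` is
`windowProd f m (n - m)`. -/
def windowProd (a : ℤ) : M := ∏ j ∈ range m, F (a + j)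

theorem windowProd_succ (a : ℤ) : windowProd F (m + 1) a = windowProd F m a * F (a + m) :=
  prod_range_succ _ m

theorem windowProd_succ' (a : ℤ) : windowProd F (m + 1) a = windowProd F m (a + 1) * F a := by
  rw [windowProd, windowProd, prod_range_succ', Nat.cast_zero, add_zero]
  exact congrArg (· * F a) (prod_congr rfl fun j _ => congrArg F (by push_cast; ring))

theorem prod_range_add_add_one_eq_windowProd (n : ℤ) :
    ∏ s ∈ range m, F (n + s + 1) = windowProd F m (n + 1) :=
  prod_congr rfl fun s _ => by rw [add_right_comm]

theorem prod_range_sub_sub_one_eq_windowProd (n : ℤ) :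
    ∏ s ∈ range m, F (n - s - 1) = windowProd F m (n - m) :=
  prod_range_sub_sub_one F n m

end WindowProd

theorem miura_bracket_eq {R : Type*} [CommRing R] (F : ℤ → R) (m : ℕ) (α : R) (n : ℤ) :
    F n * (windowProd F m (n + 1) - windowProd F m (n - m))
      + ∑ k ∈ range m, (F (n + k + 1) - α) *
          (windowProd F m (n + k + 1 + 1) - windowProd F m (n + k + 1 - m))
    = ∑ k ∈ range m, (F (n + k + 1) - α) * windowProd F m (n + k + 1 + 1)
      - ∑ k ∈ range m, (F (n - k - 1) - α) * windowProd F m (n - k - 1 + 1) := by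
  set Q := fun k : ℕ => windowProd F (m + 1) (n - m + k)
  have hstep (k : ℕ) : (F (n + k + 1) - α) * windowProd F m (n + k + 1 - m)
      - (F (n - m + k) - α) * windowProd F m (n - m + k + 1) = Q (k + 1) - Q k := by
    simp only [Q]
    rw [windowProd_succ, windowProd_succ', Nat.cast_succ, ← add_assoc,
      show n - m + k + 1 + m = n + k + 1 by ring, show n - m + k + 1 = n + k + 1 - m by ring]
    ring
  have htelescope : ∑ k ∈ range m, (Q (k + 1) - Q k)
      = F n * (windowProd F m (n + 1) - windowProd F m (n - m)) := by
    rw [sum_range_sub]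
    simp only [Q, Nat.cast_zero, add_zero, sub_add_cancel]
    rw [windowProd_succ' F m n, windowProd_succ F m (n - m), sub_add_cancel]
    ring
  simp only [← sum_congr rfl fun k _ => hstep k, sum_sub_distrib] at htelescope
  rw [sum_range_sub_sub_one (fun j => (F j - α) * windowProd F m (j + 1))]
  simp only [mul_sub, sum_sub_distrib]
  linear_combination -htelescope

theorem miura_modified_to_bogoyavlensky_first_general
    (m : ℕ) (α : ℂ)
    (f : ℝ → ℤ → ℂ)
    (hf : ∀ (t : ℝ) (n : ℤ),
      HasDerivAt (fun τ => f τ n)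
        (f t n * (f t n - α) *
          ((∏ s ∈ Finset.range m, f t (n + s + 1)) -
            ∏ s ∈ Finset.range m, f t (n - s - 1))) t)
    (u : ℝ → ℤ → ℂ)
    (hu : ∀ (t : ℝ) (n : ℤ),
      u t n = (f t n - α) * ∏ s ∈ Finset.range m, f t (n + s + 1)) :
    ∀ (t : ℝ) (n : ℤ),
      HasDerivAt (fun τ => u τ n)
        (u t n *
          ((∑ s ∈ Finset.range m, u t (n + s + 1)) -
            ∑ s ∈ Finset.range m, u t (n - s - 1))) t := by
  intro t n
  have hf' (j : ℤ) : HasDerivAt (fun τ => f τ j)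
      (f t j * ((f t j - α) * (windowProd (f t) m (j + 1) - windowProd (f t) m (j - m)))) t := by
    simpa only [prod_range_add_add_one_eq_windowProd, prod_range_sub_sub_one_eq_windowProd,
      mul_assoc] using hf t j
  have hwindow : HasDerivAt (fun τ => windowProd (f τ) m (n + 1))
      (windowProd (f t) m (n + 1) * ∑ k ∈ range m, (f t (n + k + 1) - α) *
        (windowProd (f t) m (n + k + 1 + 1) - windowProd (f t) m (n + k + 1 - m))) t := by
    refine (HasDerivAt.fun_finsetProd_of_eq_mul (u := range m)
      fun k _ => hf' (n + 1 + k)).congr_deriv ?_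
    congr 1
    simp only [add_right_comm n 1]
  have hu_eq : (fun τ => u τ n) = fun τ => (f τ n - α) * windowProd (f τ) m (n + 1) :=
    funext fun τ => by rw [hu, prod_range_add_add_one_eq_windowProd]
  rw [hu_eq]
  refine (((hf' n).sub_const α).fun_mul hwindow).congr_deriv ?_
  simp only [hu, prod_range_add_add_one_eq_windowProd]
  linear_combination ((f t n - α) * windowProd (f t) m (n + 1)) * miura_bracket_eq (f t) m α n

/-- The Miura-type substitution `u = f_m ⋯ f_1 (f - α)` maps solutions of the
modified Bogoyavlensky lattice into solutions of the Bogoyavlensky lattice. -/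
theorem miura_modified_to_bogoyavlensky_first
    (m : ℕ) (hm : 1 ≤ m) (α : ℂ)
    (f : ℝ → ℤ → ℂ)
    (hf : ∀ (t : ℝ) (n : ℤ),
      HasDerivAt (fun τ => f τ n)
        (f t n * (f t n - α) *
          ((∏ s ∈ Finset.range m, f t (n + s + 1)) -
            ∏ s ∈ Finset.range m, f t (n - s - 1))) t)
    (u : ℝ → ℤ → ℂ)
    (hu : ∀ (t : ℝ) (n : ℤ),
      u t n = (f t n - α) * ∏ s ∈ Finset.range m, f t (n + s + 1)) :
    ∀ (t : ℝ) (n : ℤ),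
      HasDerivAt (fun τ => u τ n)
        (u t n *
          ((∑ s ∈ Finset.range m, u t (n + s + 1)) -
            ∑ s ∈ Finset.range m, u t (n - s - 1))) t :=
  miura_modified_to_bogoyavlensky_first_general m α f hf u hu
end

section
/- Let m ≥ 1 be an integer, α, λ ∈ ℂ with α ≠ 0, λ ≠ 0, and let f : ℤ → ℂ satisfy f(n) ≠ α for all n. Define u(n) = (f(n) − α)·∏_{s=1}^{m} f(n+s) and ũ(n) = (f(n+m) − α)·∏_{s=0}^{m−1} f(n+s). Let U(n) denote the (m+1)×(m+1) complex matrix whose rows 1,…,m form the shift block (entry (k,k+1) equal to 1, all other entries of these rows 0) and whose last row is (u(n), 0, …, 0, λ); let Ũ(n) be the same matrix with u(n) replaced by ũ(n). Let F(n) be the (m+1)×(m+1) matrix with diagonal entries F_{k,k} = −f(n+m+1−k)/(f(n+m+1−k) − α) for k = 1,…,m, superdiagonal entries F_{k,k+1} = α/(λ·(f(n+m+1−k) − α)) for k = 1,…,m, bottom row entries F_{m+1,1} = (α/λ)·∏_{s=1}^{m} f(n+s) and F_{m+1,m+1} = −1, and all other entries 0. Then for all n ∈ ℤ the matrix identity Ũ(n)·F(n)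 = F(n−1)·U(n) holds. -/
lemma sum_one_aux {N : ℕ} (c : ℕ) (hc : c < N) (a : ℂ) (g : Fin N → ℂ) :
    ∑ j : Fin N, (if (j : ℕ) = c then a else 0) * g j = a * g ⟨c, hc⟩ := by
  have h : ∀ j : Fin N, (if (j : ℕ) = c then a else 0) * g j
      = if j = ⟨c, hc⟩ then a * g ⟨c, hc⟩ else 0 := by
    intro j
    by_cases hj : j = ⟨c, hc⟩
    · subst hj; simp
    · rw [if_neg hj, if_neg (by simpa [Fin.ext_iff] using hj), zero_mul]
  simp [h, Finset.sum_ite_eq']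

lemma sum_two_aux {N : ℕ} (c0 c1 : ℕ) (h0 : c0 < N) (h1 : c1 < N) (hne : c0 ≠ c1)
    (a b : ℂ) (g : Fin N → ℂ) :
    ∑ j : Fin N, (if (j : ℕ) = c0 then a else if (j : ℕ) = c1 then b else 0) * g j
      = a * g ⟨c0, h0⟩ + b * g ⟨c1, h1⟩ := by
  have h : ∀ j : Fin N, (if (j : ℕ) = c0 then a else if (j : ℕ) = c1 then b else 0) * g j
      = (if (j : ℕ) = c0 then a else 0) * g j + (if (j : ℕ) = c1 then b else 0) * g j := by
    intro j
    by_cases hj0 : (j : ℕ) = c0 <;> by_cases hj1 : (j : ℕ) = c1 <;> simp_all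
  rw [Finset.sum_congr rfl fun j _ => h j, Finset.sum_add_distrib,
    sum_one_aux c0 h0 a g, sum_one_aux c1 h1 b g]

/-- Matrix (zero-curvature) representation of the Darboux transformation for the
Bogoyavlensky lattice: `Ũ(n) F(n) = F(n-1) U(n)`. -/
theorem bogoyavlensky_zero_curvature
    (m : ℕ) (hm : 1 ≤ m) (α lam : ℂ) (hα : α ≠ 0) (hlam : lam ≠ 0)
    (f : ℤ → ℂ) (hf : ∀ n : ℤ, f n ≠ α)
    (u u' : ℤ → ℂ)
    (hu : ∀ n : ℤ, u n = (f n - α) * ∏ s ∈ Finset.range m, f (n + s + 1))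
    (hu' : ∀ n : ℤ, u' n = (f (n + m) - α) * ∏ s ∈ Finset.range m, f (n + s))
    (U U' F : ℤ → Matrix (Fin (m + 1)) (Fin (m + 1)) ℂ)
    (hU : ∀ (n : ℤ) (k l : Fin (m + 1)),
      U n k l =
        if (k : ℕ) < m then (if (l : ℕ) = (k : ℕ) + 1 then 1 else 0)
        else if (l : ℕ) = 0 then u n
        else if (l : ℕ) = m then lam
        else 0)
    (hU' : ∀ (n : ℤ) (k l : Fin (m + 1)),
      U' n k l =
        if (k : ℕ) < m then (if (l : ℕ) = (k : ℕ) + 1 then 1 else 0)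
        else if (l : ℕ) = 0 then u' n
        else if (l : ℕ) = m then lam
        else 0)
    (hF : ∀ (n : ℤ) (k l : Fin (m + 1)),
      F n k l =
        if (k : ℕ) < m then
          (if l = k then -f (n + m - (k : ℕ)) / (f (n + m - (k : ℕ)) - α)
           else if (l : ℕ) = (k : ℕ) + 1 then
             α / (lam * (f (n + m - (k : ℕ)) - α))
           else 0)
        else if (l : ℕ) = 0 then (α / lam) * ∏ s ∈ Finset.range m, f (n + s + 1)
        else if (l : ℕ) = m then -1
        else 0) :
    ∀ n : ℤ, U' n * F n = F (n - 1) * U n := by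
  intro n
  have hsub : ∀ x : ℤ, f x - α ≠ 0 := fun x => sub_ne_zero_of_ne (hf x)
  have hvm : ∀ (c : ℕ) (h : c < m + 1), ((⟨c, h⟩ : Fin (m + 1)) : ℕ) = c := fun _ _ => rfl
  have key : f (n + m) * (∏ s ∈ Finset.range m, f (n + s))
      = f n * ∏ s ∈ Finset.range m, f (n + s + 1) := by
    have h1 := Finset.prod_range_succ (fun s : ℕ => f (n + s)) m
    have h2 := Finset.prod_range_succ' (fun s : ℕ => f (n + s)) m
    have h3 : ∏ s ∈ Finset.range m, f (n + ((s : ℕ) + 1 : ℕ))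
        = ∏ s ∈ Finset.range m, f (n + s + 1) :=
      Finset.prod_congr rfl fun s _ => by push_cast; ring_nf
    rw [h1, h3] at h2
    rw [show n + ((0 : ℕ) : ℤ) = n by push_cast; ring] at h2
    linear_combination h2
  ext k l
  rw [Matrix.mul_apply, Matrix.mul_apply]
  by_cases hk : (k : ℕ) < m
  · -- rows k < m
    have hk1 : (k : ℕ) + 1 < m + 1 := by omega
    have hUrow : ∀ j : Fin (m + 1), U' n k j = if (j : ℕ) = (k : ℕ) + 1 then (1 : ℂ) else 0 := by
      intro j; rw [hU', if_pos hk]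
    have hFrow : ∀ j : Fin (m + 1), F (n - 1) k j =
        if (j : ℕ) = (k : ℕ) then -f (n - 1 + m - (k : ℕ)) / (f (n - 1 + m - (k : ℕ)) - α)
        else if (j : ℕ) = (k : ℕ) + 1 then α / (lam * (f (n - 1 + m - (k : ℕ)) - α))
        else 0 := by
      intro j; rw [hF, if_pos hk]
      by_cases hj : (j : ℕ) = (k : ℕ)
      · rw [if_pos (Fin.ext hj), if_pos hj]
      · rw [if_neg (fun h => hj (congrArg Fin.val h)), if_neg hj]
    simp only [hUrow, hFrow]
    rw [sum_one_aux ((k : ℕ) + 1) hk1,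
      sum_two_aux (k : ℕ) ((k : ℕ) + 1) (by omega) hk1 (by omega)]
    rw [show (⟨(k : ℕ), by omega⟩ : Fin (m + 1)) = k from rfl]
    rw [hU n k l, if_pos hk, hU n ⟨(k : ℕ) + 1, hk1⟩ l]
    by_cases hk2 : (k : ℕ) + 1 < m
    · -- interior rows
      rw [hF n ⟨(k : ℕ) + 1, hk1⟩ l]
      simp only [Fin.ext_iff, hvm, if_pos hk2]
      rw [show n - 1 + (m : ℤ) - ((k : ℕ) : ℤ) = n + (m : ℤ) - (((k : ℕ) + 1 : ℕ) : ℤ) by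
        push_cast; ring]
      split_ifs <;> first | omega | ring1
    · -- k + 1 = m
      have hkm : (k : ℕ) + 1 = m := by omega
      rw [hF n ⟨(k : ℕ) + 1, hk1⟩ l]
      simp only [Fin.ext_iff, hvm]
      rw [if_neg (by omega : ¬ ((k : ℕ) + 1 < m))]
      rw [show n - 1 + (m : ℤ) - ((k : ℕ) : ℤ) = n by
        have : (m : ℤ) = (k : ℕ) + 1 := by exact_mod_cast hkm.symm
        rw [this]; ring]
      rw [hu n]
      have hg := hsub n
      set P := ∏ s ∈ Finset.range m, f (n + s + 1) with hP
      set a := f n with ha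
      split_ifs <;>
        first
          | omega | ring1
          | (field_simp [hg, hlam]; ring1)
  · -- bottom row k = m
    have hkm : (k : ℕ) = m := by omega
    have hUrow : ∀ j : Fin (m + 1), U' n k j =
        if (j : ℕ) = 0 then u' n else if (j : ℕ) = m then lam else 0 := by
      intro j; rw [hU', if_neg hk]
    have hFrow : ∀ j : Fin (m + 1), F (n - 1) k j =
        if (j : ℕ) = 0 then (α / lam) * ∏ s ∈ Finset.range m, f (n - 1 + s + 1)
        else if (j : ℕ) = m then (-1 : ℂ) else 0 := by
      intro j; rw [hF, if_neg hk]
    simp only [hUrow, hFrow]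
    rw [sum_two_aux 0 m (by omega) (by omega) (by omega),
      sum_two_aux 0 m (by omega) (by omega) (by omega)]
    rw [show ∏ s ∈ Finset.range m, f (n - 1 + s + 1) = ∏ s ∈ Finset.range m, f (n + s) from
      Finset.prod_congr rfl fun s _ => by ring_nf]
    rw [hF n ⟨0, by omega⟩ l, hF n ⟨m, by omega⟩ l,
      hU n ⟨0, by omega⟩ l, hU n ⟨m, by omega⟩ l, hu n, hu' n]
    simp only [Fin.ext_iff, hvm]
    rw [if_pos (show (0 : ℕ) < m from hm), if_pos (show (0 : ℕ) < m from hm),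
      if_neg (lt_irrefl m), if_neg (lt_irrefl m)]
    rw [show n + (m : ℤ) - ((0 : ℕ) : ℤ) = n + (m : ℤ) by push_cast; ring]
    have hg := hsub (n + (m : ℤ))
    have hg0 := hsub n
    set Q := ∏ s ∈ Finset.range m, f (n + s) with hQ2
    set P := ∏ s ∈ Finset.range m, f (n + s + 1) with hP
    set b := f (n + (m : ℤ)) with hb
    set a := f n with ha
    split_ifs <;>
      first
        | omega | ring1
        | (field_simp [hg, hg0, hlam]; ring1)
        | (field_simp [hg, hg0, hlam]; linear_combination lam * key)
        | (field_simp [hg, hg0, hlam]; linear_combination (-lam) * key)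
        | (field_simp [hg, hg0, hlam]; linear_combination key)
        | (field_simp [hg, hg0, hlam]; linear_combination (-1 : ℂ) * key)
        | (field_simp [hg, hg0, hlam]; linear_combination (b - α) * key)
        | (field_simp [hg, hg0, hlam]; linear_combination (α - b) * key)
        | (field_simp [hg, hg0, hlam]; linear_combination lam * (b - α) * key)
        | (field_simp [hg, hg0, hlam])
end

section
/- Let m ≥ 1 be an integer, α ∈ ℂ with α ≠ 0, and let f_1, …, f_m ∈ ℂ satisfy f_s ≠ 0 and f_s ≠ α for all s. Let F be the (m+1)×(m+1) complex matrix with diagonal entries F_{k,k} = −f_{m+1−k}/(f_{m+1−k} − α) for k = 1,…,m, superdiagonal entries F_{k,k+1} = α/(α·(f_{m+1−k} − α)) = 1/(f_{m+1−k} − α) for k = 1,…,m (i.e. the Darboux matrix evaluated at spectral parameter λ = α), bottom row entries F_{m+1,1} = f_m⋯f_1 and F_{m+1,m+1} = −1, and all other entries 0. Then the vector K = (1, f_m, f_m f_{m−1}, …, f_m f_{m−1}⋯f_1)ᵀ ∈ ℂ^{m+1} satisfies F·K = 0, and the kernel of F is exactly the one-dimensional span of K. -/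
/-!
Away from the last row, the `k`-th row of `F` reads `(v_{k+1} - f_{m-k} v_k) / (f_{m-k} - α)`, so a
kernel vector obeys the recursion `v_{k+1} = f_{m-k} v_k` and is therefore `v_0 • K`. The last row,
`f_m ⋯ f_1 v_0 - v_m`, is the closing condition of that recursion and holds automatically for `K`.
-/

open Finset Matrix

theorem Matrix.mulVec_apply_eq_add_of_eq_zero {R ι κ : Type*} [NonUnitalNonAssocSemiring R]
    [Fintype κ] (M : Matrix ι κ R) (v : κ → R) {i : ι} {a b : κ} (hab : a ≠ b)
    (h : ∀ j, j ≠ a → j ≠ b → M i j = 0) :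
    (M *ᵥ v) i = M i a * v a + M i b * v b :=
  Fintype.sum_eq_add a b hab fun j hj => by simp [h j hj.1 hj.2]

theorem eq_smul_prod_range_of_succ_eq_mul {R : Type*} [CommSemiring R] {n : ℕ}
    {v : Fin (n + 1) → R} {c : ℕ → R} (h : ∀ i : Fin n, v i.succ = c i * v i.castSucc) :
    v = v 0 • fun i : Fin (n + 1) => ∏ t ∈ range i, c t := by
  funext i
  induction i using Fin.induction with
  | zero => simp
  | succ i ih =>
    rw [h, ih]
    simp only [Pi.smul_apply, smul_eq_mul, Fin.val_succ, Fin.val_castSucc, prod_range_succ]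
    ring

theorem prod_range_succ_eq_prod_range_sub {M : Type*} [CommMonoid M] (f : ℕ → M) (m : ℕ) :
    ∏ s ∈ range m, f (s + 1) = ∏ t ∈ range m, f (m - t) := by
  rw [← prod_range_reflect]
  refine prod_congr rfl fun t ht => congrArg f ?_
  have := mem_range.1 ht
  omega

namespace Bogoyavlensky

/-- `F[f, α, α]` with rows and columns indexed from `0`, so that row `k < m` is row `k + 1` of the
paper, built from `f_{m-k}`. -/
noncomputable def darbouxMatrix (m : ℕ) (α : ℂ) (f : ℕ → ℂ) : Matrix (Fin (m + 1)) (Fin (m + 1)) ℂ :=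
  Matrix.of fun k l =>
    if (k : ℕ) < m then
      (if l = k then -f (m - (k : ℕ)) / (f (m - (k : ℕ)) - α)
       else if (l : ℕ) = (k : ℕ) + 1 then 1 / (f (m - (k : ℕ)) - α)
       else 0)
    else if (l : ℕ) = 0 then ∏ s ∈ Finset.range m, f (s + 1)
    else if (l : ℕ) = m then -1
    else 0

variable {m : ℕ} {α : ℂ} {f : ℕ → ℂ}

theorem darbouxMatrix_mulVec_castSucc (v : Fin (m + 1) → ℂ) (i : Fin m) :
    (darbouxMatrix m α f *ᵥ v) i.castSucc =
      -f (m - i) / (f (m - i) - α) * v i.castSucc + 1 / (f (m - i) - α) * v i.succ := by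
  rw [mulVec_apply_eq_add_of_eq_zero _ _ (Fin.castSucc_lt_succ (i := i)).ne]
  · simp [darbouxMatrix, (Fin.castSucc_lt_succ (i := i)).ne']
  · intro j hj₁ hj₂
    have hj₂ : (j : ℕ) ≠ i + 1 := fun h => hj₂ (Fin.ext (by simpa using h))
    simp [darbouxMatrix, hj₁, hj₂]

theorem darbouxMatrix_mulVec_last (hm : 0 < m) (v : Fin (m + 1) → ℂ) :
    (darbouxMatrix m α f *ᵥ v) (Fin.last m) =
      (∏ s ∈ range m, f (s + 1)) * v 0 + -1 * v (Fin.last m) := by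
  have h0 : (0 : Fin (m + 1)) ≠ Fin.last m := Fin.ext_iff.not.2 hm.ne
  rw [mulVec_apply_eq_add_of_eq_zero _ _ h0]
  · simp [darbouxMatrix, hm.ne']
  · intro j hj₁ hj₂
    have hj₂ : (j : ℕ) ≠ m := Fin.ext_iff.not.1 hj₂
    simp [darbouxMatrix, hj₁, hj₂]

theorem darbouxMatrix_mulVec_eq_zero_iff (hm : 0 < m) (hfα : ∀ i : Fin m, f (m - i) ≠ α)
    (v : Fin (m + 1) → ℂ) :
    darbouxMatrix m α f *ᵥ v = 0 ↔
      (∀ i : Fin m, v i.succ = f (m - i) * v i.castSucc) ∧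
        v (Fin.last m) = (∏ s ∈ range m, f (s + 1)) * v 0 := by
  rw [funext_iff, Fin.forall_fin_succ']
  refine and_congr (forall_congr' fun i => ?_) ?_
  · have hd : f (m - i) - α ≠ 0 := sub_ne_zero.2 (hfα i)
    rw [darbouxMatrix_mulVec_castSucc, Pi.zero_apply, ← sub_eq_zero (a := v i.succ)]
    constructor <;> intro h
    · field_simp at h
      linear_combination h
    · field_simp
      linear_combination h
  · rw [darbouxMatrix_mulVec_last hm, Pi.zero_apply, eq_comm (a := v _)]
    constructor <;> intro h <;> linear_combination h

end Bogoyavlensky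

open Bogoyavlensky in
theorem bogoyavlensky_darboux_matrix_kernel_general
    (m : ℕ) (hm : 1 ≤ m) (α : ℂ)
    (f : ℕ → ℂ)
    (hfα : ∀ s, 1 ≤ s → s ≤ m → f s ≠ α)
    (F : Matrix (Fin (m + 1)) (Fin (m + 1)) ℂ)
    (hF : ∀ k l : Fin (m + 1),
      F k l =
        if (k : ℕ) < m then
          (if l = k then -f (m - (k : ℕ)) / (f (m - (k : ℕ)) - α)
           else if (l : ℕ) = (k : ℕ) + 1 then 1 / (f (m - (k : ℕ)) - α)
           else 0)
        else if (l : ℕ) = 0 then ∏ s ∈ Finset.range m, f (s + 1)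
        else if (l : ℕ) = m then -1
        else 0)
    (K : Fin (m + 1) → ℂ)
    (hK : ∀ i : Fin (m + 1), K i = ∏ t ∈ Finset.range (i : ℕ), f (m - t)) :
    F.mulVec K = 0 ∧ LinearMap.ker F.mulVecLin = Submodule.span ℂ {K} := by
  obtain rfl : F = darbouxMatrix m α f := Matrix.ext hF
  have hKfun : K = fun i : Fin (m + 1) => ∏ t ∈ range i, f (m - t) := funext hK
  have hfα' (i : Fin m) : f (m - i) ≠ α := hfα _ (by omega) (by omega)
  have hKer : darbouxMatrix m α f *ᵥ K = 0 := by
    refine (darbouxMatrix_mulVec_eq_zero_iff hm hfα' K).2 ⟨fun i => ?_, ?_⟩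
    · simp only [hK, Fin.val_succ, Fin.val_castSucc, prod_range_succ, mul_comm]
    · simp [hK, prod_range_succ_eq_prod_range_sub]
  refine ⟨hKer, le_antisymm (fun v hv => ?_) ?_⟩
  · rw [LinearMap.mem_ker, mulVecLin_apply, darbouxMatrix_mulVec_eq_zero_iff hm hfα'] at hv
    rw [eq_smul_prod_range_of_succ_eq_mul (c := fun t => f (m - t)) hv.1, ← hKfun]
    exact Submodule.smul_mem _ _ (Submodule.mem_span_singleton_self K)
  · rwa [Submodule.span_le, Set.singleton_subset_iff]

/-- The Darboux matrix `F[f, α, λ]` of the Bogoyavlensky lattice, evaluated at the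
spectral parameter `λ = α`, has one-dimensional kernel spanned by
`K = (1, f_m, f_m f_{m-1}, …, f_m ⋯ f_1)ᵀ`. -/
theorem bogoyavlensky_darboux_matrix_kernel
    (m : ℕ) (hm : 1 ≤ m) (α : ℂ) (hα : α ≠ 0)
    (f : ℕ → ℂ) (hf0 : ∀ s, 1 ≤ s → s ≤ m → f s ≠ 0)
    (hfα : ∀ s, 1 ≤ s → s ≤ m → f s ≠ α)
    (F : Matrix (Fin (m + 1)) (Fin (m + 1)) ℂ)
    (hF : ∀ k l : Fin (m + 1),
      F k l =
        if (k : ℕ) < m then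
          (if l = k then -f (m - (k : ℕ)) / (f (m - (k : ℕ)) - α)
           else if (l : ℕ) = (k : ℕ) + 1 then 1 / (f (m - (k : ℕ)) - α)
           else 0)
        else if (l : ℕ) = 0 then ∏ s ∈ Finset.range m, f (s + 1)
        else if (l : ℕ) = m then -1
        else 0)
    (K : Fin (m + 1) → ℂ)
    (hK : ∀ i : Fin (m + 1), K i = ∏ t ∈ Finset.range (i : ℕ), f (m - t)) :
    F.mulVec K = 0 ∧ LinearMap.ker F.mulVecLin = Submodule.span ℂ {K} :=
  bogoyavlensky_darboux_matrix_kernel_general m hm α f hfα F hF K hK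
end

section
/- Let m ≥ 1, and let a, b ∈ ℂ be nonzero with a ≠ b. For an m-tuple x = (x_1, …, x_m) of nonzero complex numbers with x_s ≠ parameter, let F[x, c, λ] denote the (m+1)×(m+1) matrix with diagonal entries −x_{m+1−k}/(x_{m+1−k} − c) (k = 1,…,m), superdiagonal entries c/(λ(x_{m+1−k} − c)) (k = 1,…,m), bottom-left entry (c/λ)·x_m⋯x_1, bottom-right entry −1, and zeros elsewhere. Given m-tuples x (with parameter a) and y (with parameter b), define x' = S_{a,b}(x, y) by x'_1 = (b·y_m⋯y_1 − a·x_m⋯x_1)(y_1 − b)/(x_m⋯x_2·(b·x_1 − a·y_1)) and x'_s = x_s·(y_s − b)(b·x_{s−1} − a·y_{s−1})/((y_{s−1} − b)(b·x_s − a·y_s)) for s = 2,…,m, and define y' = S_{b,a}(y, x) by the same formulas with the roles of (x, a) and (y, b) interchanged. Then, whenever all denominators involved are nonzero and all entries of the matrices are defined, the refactorization identity F[y', b, λ]·F[x, a, λ] = F[x', a, λ]·F[y, b, λ] holds for every λ ≠ 0. -/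
/-!
Let `P` be the permutation matrix of the cyclic shift `k ↦ k + 1` of `Fin (m + 1)`. The Darboux
matrix is `F = D + E P` with `D`, `E` diagonal: the bottom-left entry `(c/λ) x_m⋯x_1` is the
superdiagonal entry of the last row, wrapped around. Since `P D = D' P` with `D'` the shifted
diagonal, a product of two such matrices is `D₁D₂ + (D₁E₂ + E₁D₂') P + E₁E₂' P²`, so the
refactorization reduces to three scalar identities per row. In the interior rows `x'_s - a` and
`y'_s - b` are fractions with the same numerator, in the first row the same holds up to the
factors `y_1` and `x_1`, and in the bottom row the products `x'_m⋯x'_1` and `y'_m⋯y'_1`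
telescope; each identity is then a routine rational identity.
-/

open Finset

/-- The Darboux matrix `F[x, c, λ]` of the Bogoyavlensky lattice, built from the
edge variables `x_1, …, x_m` and the parameter `c`. -/
noncomputable def bogFmat (m : ℕ) (x : ℕ → ℂ) (c lam : ℂ) :
    Matrix (Fin (m + 1)) (Fin (m + 1)) ℂ :=
  Matrix.of fun k l =>
    if (k : ℕ) < m then
      (if l = k then -x (m - (k : ℕ)) / (x (m - (k : ℕ)) - c)
       else if (l : ℕ) = (k : ℕ) + 1 then c / (lam * (x (m - (k : ℕ)) - c))
       else 0)
    else if (l : ℕ) = 0 then (c / lam) * ∏ s ∈ Finset.range m, x (s + 1)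
    else if (l : ℕ) = m then -1
    else 0

/-- The `m`-component superposition map `S_{p,q}(x, y)` of the Bogoyavlensky lattice:
`x'_1 = (q y_m⋯y_1 - p x_m⋯x_1)(y_1 - q)/(x_m⋯x_2 (q x_1 - p y_1))`,
`x'_s = x_s (y_s - q)(q x_{s-1} - p y_{s-1})/((y_{s-1} - q)(q x_s - p y_s))`, `s ≥ 2`. -/
noncomputable def bogSuperpose (m : ℕ) (p q : ℂ) (x y : ℕ → ℂ) : ℕ → ℂ := fun s =>
  if s = 1 then
    (q * (∏ r ∈ Finset.range m, y (r + 1)) - p * ∏ r ∈ Finset.range m, x (r + 1))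
      * (y 1 - q) / ((∏ r ∈ Finset.range (m - 1), x (r + 2)) * (q * x 1 - p * y 1))
  else
    x s * (y s - q) * (q * x (s - 1) - p * y (s - 1))
      / ((y (s - 1) - q) * (q * x s - p * y s))

open Matrix

section PermutedBidiagonal

variable {n R : Type*} [Fintype n] [DecidableEq n] [CommSemiring R] (σ : Equiv.Perm n)

theorem permMatrix_mul_diagonal (d : n → R) :
    σ.permMatrix R * diagonal d = diagonal (d ∘ σ) * σ.permMatrix R := by
  ext i j
  by_cases h : j = σ i <;> simp [h, eq_comm]

theorem diagonal_add_diagonal_mul_permMatrix_mul (d₁ e₁ d₂ e₂ : n → R) :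
    (diagonal d₁ + diagonal e₁ * σ.permMatrix R) * (diagonal d₂ + diagonal e₂ * σ.permMatrix R)
      = diagonal (d₁ * d₂) + diagonal (d₁ * e₂ + e₁ * (d₂ ∘ σ)) * σ.permMatrix R
        + diagonal (e₁ * (e₂ ∘ σ)) * (σ.permMatrix R * σ.permMatrix R) := by
  have hmul : ∀ f g : n → R, diagonal (f * g) = diagonal f * diagonal g := fun f g =>
    (diagonal_mul_diagonal f g).symm
  have hadd : ∀ f g : n → R, diagonal (f + g) = diagonal f + diagonal g := fun f g =>
    (diagonal_add f g).symm
  simp only [hmul, hadd, add_mul, mul_add, Matrix.mul_assoc,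
    ← Matrix.mul_assoc (σ.permMatrix R), permMatrix_mul_diagonal]
  abel

theorem diagonal_add_diagonal_mul_permMatrix_mul_eq {d₁ e₁ d₂ e₂ d₃ e₃ d₄ e₄ : n → R}
    (h₀ : d₁ * d₂ = d₃ * d₄) (h₁ : d₁ * e₂ + e₁ * (d₂ ∘ σ) = d₃ * e₄ + e₃ * (d₄ ∘ σ))
    (h₂ : e₁ * (e₂ ∘ σ) = e₃ * (e₄ ∘ σ)) :
    (diagonal d₁ + diagonal e₁ * σ.permMatrix R) * (diagonal d₂ + diagonal e₂ * σ.permMatrix R)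
      = (diagonal d₃ + diagonal e₃ * σ.permMatrix R)
        * (diagonal d₄ + diagonal e₄ * σ.permMatrix R) := by
  rw [diagonal_add_diagonal_mul_permMatrix_mul, diagonal_add_diagonal_mul_permMatrix_mul,
    h₀, h₁, h₂]

end PermutedBidiagonal

theorem prod_range_div_of_ne_zero {G₀ : Type*} [CommGroupWithZero G₀] (f : ℕ → G₀) (n : ℕ)
    (hf : ∀ i ≤ n, f i ≠ 0) : ∏ i ∈ range n, f (i + 1) / f i = f n / f 0 := by
  induction n with
  | zero => simp [div_self (hf 0 le_rfl)]
  | succ n ih =>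
    rw [prod_range_succ, ih fun i hi => hf i (by omega), div_mul_div_cancel₀' (hf n (by omega))]

noncomputable def bogFmatDiag (m : ℕ) (x : ℕ → ℂ) (c : ℂ) (k : Fin (m + 1)) : ℂ :=
  if (k : ℕ) < m then -x (m - k) / (x (m - k) - c) else -1

noncomputable def bogFmatSuper (m : ℕ) (x : ℕ → ℂ) (c lam : ℂ) (k : Fin (m + 1)) : ℂ :=
  if (k : ℕ) < m then c / (lam * (x (m - k) - c)) else c / lam * ∏ s ∈ range m, x (s + 1)

/-- For `m = 0` the two nonzero entries of the bottom row would collide. -/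
theorem bogFmat_eq (n : ℕ) (x : ℕ → ℂ) (c lam : ℂ) :
    bogFmat (n + 1) x c lam = diagonal (bogFmatDiag (n + 1) x c)
      + diagonal (bogFmatSuper (n + 1) x c lam) * (finRotate (n + 2)).permMatrix ℂ := by
  ext k l
  simp only [bogFmat, bogFmatDiag, bogFmatSuper, of_apply, Matrix.add_apply, diagonal_apply,
    diagonal_mul, PEquiv.toMatrix_apply, Equiv.toPEquiv_apply, Option.mem_def, Option.some_inj,
    Fin.ext_iff, coe_finRotate, Fin.val_last]
  have := l.isLt
  have := k.isLt
  split_ifs <;> first | omega | simp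

theorem bogSuperpose_one (n : ℕ) (p q : ℂ) (x y : ℕ → ℂ) :
    bogSuperpose (n + 1) p q x y 1
      = (q * ∏ r ∈ range (n + 1), y (r + 1) - p * ∏ r ∈ range (n + 1), x (r + 1)) * (y 1 - q)
        / ((∏ r ∈ range n, x (r + 2)) * (q * x 1 - p * y 1)) := by
  simp [bogSuperpose]

theorem bogSuperpose_of_two_le (m : ℕ) (p q : ℂ) (x y : ℕ → ℂ) {s : ℕ} (hs : 2 ≤ s) :
    bogSuperpose m p q x y s = x s * (y s - q) * (q * x (s - 1) - p * y (s - 1))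
      / ((y (s - 1) - q) * (q * x s - p * y s)) := by
  simp [bogSuperpose, show s ≠ 1 by omega]

theorem prod_bogSuperpose (n : ℕ) (p q : ℂ) (x y : ℕ → ℂ)
    (hx : ∀ s, 2 ≤ s → s ≤ n + 1 → x s ≠ 0) (hy : ∀ s, 1 ≤ s → s ≤ n + 1 → y s ≠ q)
    (hden : ∀ s, 1 ≤ s → s ≤ n + 1 → q * x s - p * y s ≠ 0) :
    ∏ r ∈ range (n + 1), bogSuperpose (n + 1) p q x y (r + 1)
      = (q * ∏ r ∈ range (n + 1), y (r + 1) - p * ∏ r ∈ range (n + 1), x (r + 1))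
        * (y (n + 1) - q) / (q * x (n + 1) - p * y (n + 1)) := by
  set g : ℕ → ℂ := fun i => (y (i + 1) - q) / (q * x (i + 1) - p * y (i + 1))
  have hg : ∀ i ≤ n, g i ≠ 0 := fun i hi =>
    div_ne_zero (sub_ne_zero.2 (hy _ (by omega) (by omega))) (hden _ (by omega) (by omega))
  have htail : ∀ r, bogSuperpose (n + 1) p q x y (r + 2) = x (r + 2) * (g (r + 1) / g r) := by
    intro r
    rw [bogSuperpose_of_two_le _ _ _ _ _ (by omega), show r + 2 - 1 = r + 1 by omega]
    simp only [g, div_div_div_eq]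
    ring
  have hQx : ∏ r ∈ range n, x (r + 2) ≠ 0 :=
    prod_ne_zero_iff.2 fun r hr => hx _ (by omega) (by simp at hr; omega)
  rw [prod_range_succ', prod_congr rfl fun r _ => htail r, prod_mul_distrib,
    prod_range_div_of_ne_zero g n hg, bogSuperpose_one]
  have h1 := sub_ne_zero.2 (hy 1 le_rfl (by omega))
  have h2 := hden 1 le_rfl (by omega)
  simp only [g]
  field_simp

theorem bogFmat_refactor_interior {a b lam x₀ x₁ y₀ y₁ X Y : ℂ} (hlam : lam ≠ 0)
    (hx₀ : x₀ ≠ a) (hx₁ : x₁ ≠ a) (hy₀ : y₀ ≠ b) (hy₁ : y₁ ≠ b) (hA : b * x₁ - a * y₁ ≠ 0)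
    (hX : X = x₁ * (y₁ - b) * (b * x₀ - a * y₀) / ((y₀ - b) * (b * x₁ - a * y₁)))
    (hY : Y = y₁ * (x₁ - a) * (a * y₀ - b * x₀) / ((x₀ - a) * (a * y₁ - b * x₁)))
    (hXa : X ≠ a) :
    -Y / (Y - b) * (-x₁ / (x₁ - a)) = -X / (X - a) * (-y₁ / (y₁ - b)) ∧
    -Y / (Y - b) * (a / (lam * (x₁ - a))) + b / (lam * (Y - b)) * (-x₀ / (x₀ - a))
      = -X / (X - a) * (b / (lam * (y₁ - b))) + a / (lam * (X - a)) * (-y₀ / (y₀ - b)) ∧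
    b / (lam * (Y - b)) * (a / (lam * (x₀ - a)))
      = a / (lam * (X - a)) * (b / (lam * (y₀ - b))) := by
  -- `A` and `N` stay opaque atoms, known to be nonzero, until `field_simp` has cleared denominators
  obtain ⟨A, hA_def⟩ : ∃ A, A = b * x₁ - a * y₁ := ⟨_, rfl⟩
  obtain ⟨N, hN_def⟩ : ∃ N, N = x₁ * (y₁ - b) * (b * x₀ - a * y₀) - a * ((y₀ - b) * A) :=
    ⟨_, rfl⟩
  rw [← hA_def] at hA hX
  rw [← neg_sub (b * x₁), ← hA_def] at hY
  have hx₀' := sub_ne_zero.2 hx₀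
  have hy₀' := sub_ne_zero.2 hy₀
  have hx₁' := sub_ne_zero.2 hx₁
  have hy₁' := sub_ne_zero.2 hy₁
  have hXN : X - a = N / ((y₀ - b) * A) := by
    rw [hX, hN_def]; field_simp
  have hYN : Y - b = N / ((x₀ - a) * A) := by
    rw [hY, hN_def]; field_simp; rw [hA_def]; ring
  have hN : N ≠ 0 := by
    rintro rfl; exact sub_ne_zero.2 hXa (by rw [hXN, zero_div])
  rw [eq_add_of_sub_eq' hXN, eq_add_of_sub_eq' hYN, add_sub_cancel_left, add_sub_cancel_left]
  refine ⟨?_, ?_, ?_⟩ <;> field_simp <;> subst hN_def hA_def <;> ring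

theorem bogFmat_refactor_first {a b lam x₁ y₁ Px Py Qx Qy X Y : ℂ} (hlam : lam ≠ 0)
    (hx₁ : x₁ ≠ a) (hy₁ : y₁ ≠ b) (hx₁0 : x₁ ≠ 0) (hQx : Qx ≠ 0) (hQy : Qy ≠ 0)
    (hA : b * x₁ - a * y₁ ≠ 0) (hPx : Px = Qx * x₁) (hPy : Py = Qy * y₁)
    (hX : X = (b * Py - a * Px) * (y₁ - b) / (Qx * (b * x₁ - a * y₁)))
    (hY : Y = (a * Px - b * Py) * (x₁ - a) / (Qy * (a * y₁ - b * x₁)))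
    (hXa : X ≠ a) :
    -Y / (Y - b) * (-x₁ / (x₁ - a)) = -X / (X - a) * (-y₁ / (y₁ - b)) ∧
    -Y / (Y - b) * (a / (lam * (x₁ - a))) + b / (lam * (Y - b)) * -1
      = -X / (X - a) * (b / (lam * (y₁ - b))) + a / (lam * (X - a)) * -1 ∧
    b / (lam * (Y - b)) * (a / lam * Px) = a / (lam * (X - a)) * (b / lam * Py) := by
  obtain ⟨A, hA_def⟩ : ∃ A, A = b * x₁ - a * y₁ := ⟨_, rfl⟩
  obtain ⟨K, hK_def⟩ : ∃ K, K = b * Qy * (y₁ - b) - a * Qx * (x₁ - a) := ⟨_, rfl⟩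
  rw [← hA_def] at hA hX
  rw [← neg_sub (b * x₁), ← hA_def] at hY
  subst hPx hPy
  have hx₁' := sub_ne_zero.2 hx₁
  have hy₁' := sub_ne_zero.2 hy₁
  have hXK : X - a = y₁ * K / (Qx * A) := by
    rw [hX]; field_simp; rw [hA_def, hK_def]; ring
  have hYK : Y - b = x₁ * K / (Qy * A) := by
    rw [hY]; field_simp; rw [hA_def, hK_def]; ring
  have hyK : y₁ * K ≠ 0 := by
    rintro h; exact sub_ne_zero.2 hXa (by rw [hXK, h, zero_div])
  have hy₁0 : y₁ ≠ 0 := left_ne_zero_of_mul hyK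
  have hK : K ≠ 0 := right_ne_zero_of_mul hyK
  rw [eq_add_of_sub_eq' hXK, eq_add_of_sub_eq' hYK, add_sub_cancel_left, add_sub_cancel_left]
  refine ⟨?_, ?_, ?_⟩ <;> field_simp <;> subst hK_def hA_def <;> ring

theorem bogFmat_refactor_bottom {a b lam xm ym Px Py PX PY : ℂ} (hlam : lam ≠ 0)
    (hxm : xm ≠ a) (hym : ym ≠ b) (hA : b * xm - a * ym ≠ 0)
    (hPX : PX = (b * Py - a * Px) * (ym - b) / (b * xm - a * ym))
    (hPY : PY = (a * Px - b * Py) * (xm - a) / (a * ym - b * xm)) :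
    -1 * (a / lam * Px) + b / lam * PY * (-xm / (xm - a))
      = -1 * (b / lam * Py) + a / lam * PX * (-ym / (ym - b)) ∧
    b / lam * PY * (a / (lam * (xm - a))) = a / lam * PX * (b / (lam * (ym - b))) := by
  obtain ⟨A, hA_def⟩ : ∃ A, A = b * xm - a * ym := ⟨_, rfl⟩
  rw [← hA_def] at hA hPX
  rw [← neg_sub (b * xm), ← hA_def] at hPY
  have hxm' := sub_ne_zero.2 hxm
  have hym' := sub_ne_zero.2 hym
  subst hPX hPY
  refine ⟨?_, ?_⟩ <;> field_simp <;> subst hA_def <;> ring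

/-- Row `k` corresponds to the edge index `s = m - k`; the three cases are `s ≥ 2`, `s = 1`
and the bottom row `k = m`, whose cyclic successor is row `0`. -/
theorem bogFmat_refactor_row (n : ℕ) (a b lam : ℂ) (x y : ℕ → ℂ) (hlam : lam ≠ 0)
    (hx0 : ∀ s, 1 ≤ s → s ≤ n + 1 → x s ≠ 0) (hxa : ∀ s, 1 ≤ s → s ≤ n + 1 → x s ≠ a)
    (hy0 : ∀ s, 1 ≤ s → s ≤ n + 1 → y s ≠ 0) (hyb : ∀ s, 1 ≤ s → s ≤ n + 1 → y s ≠ b)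
    (hden : ∀ s, 1 ≤ s → s ≤ n + 1 → b * x s - a * y s ≠ 0)
    (hx'a : ∀ s, 1 ≤ s → s ≤ n + 1 → bogSuperpose (n + 1) a b x y s ≠ a) (k : Fin (n + 2)) :
    bogFmatDiag (n + 1) (bogSuperpose (n + 1) b a y x) b k * bogFmatDiag (n + 1) x a k
        = bogFmatDiag (n + 1) (bogSuperpose (n + 1) a b x y) a k * bogFmatDiag (n + 1) y b k ∧
      bogFmatDiag (n + 1) (bogSuperpose (n + 1) b a y x) b k * bogFmatSuper (n + 1) x a lam k
          + bogFmatSuper (n + 1) (bogSuperpose (n + 1) b a y x) b lam k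
            * bogFmatDiag (n + 1) x a (finRotate (n + 2) k)
        = bogFmatDiag (n + 1) (bogSuperpose (n + 1) a b x y) a k * bogFmatSuper (n + 1) y b lam k
          + bogFmatSuper (n + 1) (bogSuperpose (n + 1) a b x y) a lam k
            * bogFmatDiag (n + 1) y b (finRotate (n + 2) k) ∧
      bogFmatSuper (n + 1) (bogSuperpose (n + 1) b a y x) b lam k
          * bogFmatSuper (n + 1) x a lam (finRotate (n + 2) k)
        = bogFmatSuper (n + 1) (bogSuperpose (n + 1) a b x y) a lam k
          * bogFmatSuper (n + 1) y b lam (finRotate (n + 2) k) := by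
  have := k.isLt
  rcases (by omega : (k : ℕ) < n ∨ (k : ℕ) = n ∨ (k : ℕ) = n + 1) with hk | hk | hk
  · have hrot : (finRotate (n + 2) k : ℕ) = k + 1 :=
      coe_finRotate_of_ne_last (by rw [Ne, Fin.ext_iff, Fin.val_last]; omega)
    have hs : n + 1 - (k + 1) = n + 1 - k - 1 := by omega
    simp only [bogFmatDiag, bogFmatSuper, hrot, hs, if_pos (show (k : ℕ) < n + 1 by omega),
      if_pos (show (k : ℕ) + 1 < n + 1 by omega)]
    exact bogFmat_refactor_interior hlam (hxa _ (by omega) (by omega))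
      (hxa _ (by omega) (by omega)) (hyb _ (by omega) (by omega)) (hyb _ (by omega) (by omega))
      (hden _ (by omega) (by omega)) (bogSuperpose_of_two_le _ _ _ _ _ (by omega))
      (bogSuperpose_of_two_le _ _ _ _ _ (by omega)) (hx'a _ (by omega) (by omega))
  · have hrot : (finRotate (n + 2) k : ℕ) = n + 1 := by
      rw [coe_finRotate_of_ne_last (by rw [Ne, Fin.ext_iff, Fin.val_last]; omega), hk]
    have hQx : ∏ r ∈ range n, x (r + 2) ≠ 0 :=
      prod_ne_zero_iff.2 fun r hr => hx0 _ (by omega) (by simp at hr; omega)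
    have hQy : ∏ r ∈ range n, y (r + 2) ≠ 0 :=
      prod_ne_zero_iff.2 fun r hr => hy0 _ (by omega) (by simp at hr; omega)
    simp only [bogFmatDiag, bogFmatSuper, hrot, hk, if_pos (show n < n + 1 by omega),
      lt_irrefl, if_false, show n + 1 - n = 1 by omega]
    exact bogFmat_refactor_first hlam (hxa 1 le_rfl (by omega)) (hyb 1 le_rfl (by omega))
      (hx0 1 le_rfl (by omega)) hQx hQy (hden 1 le_rfl (by omega)) (prod_range_succ' _ _)
      (prod_range_succ' _ _) (bogSuperpose_one _ _ _ _ _) (bogSuperpose_one _ _ _ _ _)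
      (hx'a 1 le_rfl (by omega))
  · have hrot : (finRotate (n + 2) k : ℕ) = 0 := by
      rw [coe_finRotate, if_pos (by rw [Fin.ext_iff, Fin.val_last]; omega)]
    simp only [bogFmatDiag, bogFmatSuper, hrot, hk, lt_irrefl, if_false,
      if_pos (show 0 < n + 1 by omega), Nat.sub_zero]
    exact ⟨trivial, bogFmat_refactor_bottom hlam (hxa _ (by omega) le_rfl)
      (hyb _ (by omega) le_rfl) (hden _ (by omega) le_rfl)
      (prod_bogSuperpose n a b x y (fun s _ hs => hx0 s (by omega) hs) hyb hden)
      (prod_bogSuperpose n b a y x (fun s _ hs => hy0 s (by omega) hs) hxa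
        fun s h1 h2 h => hden s h1 h2 (by linear_combination -h))⟩

theorem bogoyavlensky_superposition_refactorization_general
    (m : ℕ) (hm : 1 ≤ m) (a b : ℂ)
    (x y : ℕ → ℂ)
    (hx0 : ∀ s, 1 ≤ s → s ≤ m → x s ≠ 0) (hxa : ∀ s, 1 ≤ s → s ≤ m → x s ≠ a)
    (hy0 : ∀ s, 1 ≤ s → s ≤ m → y s ≠ 0) (hyb : ∀ s, 1 ≤ s → s ≤ m → y s ≠ b)
    (hden : ∀ s, 1 ≤ s → s ≤ m → b * x s - a * y s ≠ 0)
    (hx'a : ∀ s, 1 ≤ s → s ≤ m → bogSuperpose m a b x y s ≠ a) :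
    ∀ lam : ℂ, lam ≠ 0 →
      bogFmat m (bogSuperpose m b a y x) b lam * bogFmat m x a lam
        = bogFmat m (bogSuperpose m a b x y) a lam * bogFmat m y b lam := by
  intro lam hlam
  obtain ⟨n, rfl⟩ : ∃ n, m = n + 1 := ⟨m - 1, by omega⟩
  have row := bogFmat_refactor_row n a b lam x y hlam hx0 hxa hy0 hyb hden hx'a
  simp only [bogFmat_eq]
  exact diagonal_add_diagonal_mul_permMatrix_mul_eq _ (funext fun k => (row k).1)
    (funext fun k => (row k).2.1) (funext fun k => (row k).2.2)

/-- Nonlinear superposition (permutability) of two Darboux transformations for the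
Bogoyavlensky lattice: the refactorization identity
`F[y', b, λ] F[x, a, λ] = F[x', a, λ] F[y, b, λ]` with `x' = S_{a,b}(x,y)`,
`y' = S_{b,a}(y,x)`. -/
theorem bogoyavlensky_superposition_refactorization
    (m : ℕ) (hm : 1 ≤ m) (a b : ℂ) (ha : a ≠ 0) (hb : b ≠ 0) (hab : a ≠ b)
    (x y : ℕ → ℂ)
    (hx0 : ∀ s, 1 ≤ s → s ≤ m → x s ≠ 0) (hxa : ∀ s, 1 ≤ s → s ≤ m → x s ≠ a)
    (hy0 : ∀ s, 1 ≤ s → s ≤ m → y s ≠ 0) (hyb : ∀ s, 1 ≤ s → s ≤ m → y s ≠ b)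
    (hden : ∀ s, 1 ≤ s → s ≤ m → b * x s - a * y s ≠ 0)
    (hx'a : ∀ s, 1 ≤ s → s ≤ m → bogSuperpose m a b x y s ≠ a)
    (hy'b : ∀ s, 1 ≤ s → s ≤ m → bogSuperpose m b a y x s ≠ b) :
    ∀ lam : ℂ, lam ≠ 0 →
      bogFmat m (bogSuperpose m b a y x) b lam * bogFmat m x a lam
        = bogFmat m (bogSuperpose m a b x y) a lam * bogFmat m y b lam :=
  bogoyavlensky_superposition_refactorization_general m hm a b x y hx0 hxa hy0 hyb hden hx'a
end

section
/- Let m ≥ 1 and let a, b, c ∈ ℂ be nonzero and pairwise distinct. For m-tuples x, y ∈ (ℂ∖{0})^m and parameters p, q, define the map S_{p,q}(x, y) = x' componentwise by x'_1 = (q·y_m⋯y_1 − p·x_m⋯x_1)(y_1 − q)/(x_m⋯x_2·(q·x_1 − p·y_1)) and x'_s = x_s·(y_s − q)(q·x_{s−1} − p·y_{s−1})/((y_{s−1} − q)(q·x_s − p·y_s)) for s = 2,…,m. Then for all m-tuples x, y, z such that all denominators occurring below are nonzero, the 3D-consistency identity S_{a,c}(S_{a,b}(x, y), S_{c,b}(z,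 y)) = S_{a,b}(S_{a,c}(x, z), S_{b,c}(y, z)) holds. -/
/-- Nonvanishing of all denominators involved in the map `S_{p,q}(x,y)`. -/
def bogDenomOK (m : ℕ) (p q : ℂ) (x y : ℕ → ℂ) : Prop :=
  ∀ s, 1 ≤ s → s ≤ m → x s ≠ 0 ∧ y s ≠ q ∧ q * x s - p * y s ≠ 0

/-!
Write `μ_s(x) = x_s - p` for `1 ≤ s ≤ m` and `μ_0(x) = (x_1⋯x_m)⁻¹`, and
`φ_s = q μ_s(x)/μ_s(y) - p`. Then `S_{p,q}(x,y)_s = x_s φ_{s-1}/φ_s` for all `1 ≤ s ≤ m`, the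
first component included, so each side of the identity is again of the form `x_s Φ_{s-1}/Φ_s`,
where `Φ` is the product of the gauges `φ` of its two steps. For every `s`, `Φ_s` is the quotient
of two polynomials that both change sign under `(b, y) ↔ (c, z)`; hence `Φ` is symmetric and
the two sides agree.
-/

theorem Finset.prod_range_succ_div_of_ne_zero {G₀ : Type*} [CommGroupWithZero G₀] (f : ℕ → G₀)
    (n : ℕ) (hf : ∀ i, 1 ≤ i → i ≤ n → f i ≠ 0) :
    ∏ i ∈ Finset.range (n + 1), f i / f (i + 1) = f 0 / f (n + 1) := by
  induction n with
  | zero => simp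
  | succ n ih =>
    rw [Finset.prod_range_succ, ih fun i h1 h2 => hf i h1 (by omega),
      div_mul_div_cancel₀ (hf (n + 1) (by omega) le_rfl)]

namespace Bogoyavlensky

variable {m s : ℕ} {p q a b c : ℂ} {x y z : ℕ → ℂ}

noncomputable def potential (m : ℕ) (p : ℂ) (x : ℕ → ℂ) : ℕ → ℂ
  | 0 => (∏ r ∈ Finset.range m, x (r + 1))⁻¹
  | s + 1 => x (s + 1) - p

noncomputable def gauge (m : ℕ) (p q : ℂ) (x y : ℕ → ℂ) (s : ℕ) : ℂ :=
  q * potential m p x s / potential m q y s - p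

theorem prod_ne_zero_of_bogDenomOK (h : bogDenomOK m p q x y) :
    ∏ r ∈ Finset.range m, x (r + 1) ≠ 0 :=
  Finset.prod_ne_zero_iff.mpr fun r hr => (h (r + 1) (by omega) (by simp at hr; omega)).1

theorem potential_ne_zero (h : bogDenomOK m p q x y) (hY : ∏ r ∈ Finset.range m, y (r + 1) ≠ 0)
    (hs : s ≤ m) : potential m q y s ≠ 0 := by
  cases s with
  | zero => exact inv_ne_zero hY
  | succ s => exact sub_ne_zero.mpr (h (s + 1) (by omega) hs).2.1

theorem gauge_zero (h : bogDenomOK m p q x y) :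
    gauge m p q x y 0
      = (q * (∏ r ∈ Finset.range m, y (r + 1)) - p * ∏ r ∈ Finset.range m, x (r + 1))
        / ∏ r ∈ Finset.range m, x (r + 1) := by
  have := prod_ne_zero_of_bogDenomOK h
  rw [gauge, potential, potential]
  field_simp

theorem gauge_succ (hy : y (s + 1) ≠ q) :
    gauge m p q x y (s + 1) = (q * x (s + 1) - p * y (s + 1)) / (y (s + 1) - q) := by
  have := sub_ne_zero.mpr hy
  rw [gauge, potential, potential]
  field_simp
  ring

theorem gauge_succ_ne_zero (h : bogDenomOK m p q x y) (hs : s + 1 ≤ m) :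
    gauge m p q x y (s + 1) ≠ 0 := by
  obtain ⟨-, hy, hxy⟩ := h (s + 1) (by omega) hs
  rw [gauge_succ hy]
  exact div_ne_zero hxy (sub_ne_zero.mpr hy)

theorem bogSuperpose_succ (h : bogDenomOK m p q x y) (hs : s + 1 ≤ m) :
    bogSuperpose m p q x y (s + 1) = x (s + 1) * gauge m p q x y s / gauge m p q x y (s + 1) := by
  obtain ⟨-, hy, -⟩ := h (s + 1) (by omega) hs
  rw [gauge_succ hy]
  cases s with
  | zero =>
    obtain ⟨n, rfl⟩ : ∃ n, m = n + 1 := ⟨m - 1, by omega⟩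
    have hx := (h 1 le_rfl hs).1
    have hE := prod_ne_zero_of_bogDenomOK h
    rw [Finset.prod_range_succ'] at hE
    simp only [bogSuperpose, if_pos, gauge_zero h, Finset.prod_range_succ' (fun r => x (r + 1)),
      Nat.add_sub_cancel]
    field_simp
  | succ s =>
    obtain ⟨-, hy', -⟩ := h (s + 1) (by omega) (by omega)
    simp only [bogSuperpose, gauge_succ hy', Nat.add_sub_cancel, Nat.add_eq_right,
      Nat.succ_ne_zero, if_false]
    rw [mul_div_assoc', div_div_div_eq]
    ring

theorem prod_bogSuperpose (h : bogDenomOK m p q x y) (hm : 1 ≤ m) :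
    ∏ r ∈ Finset.range m, bogSuperpose m p q x y (r + 1)
      = (∏ r ∈ Finset.range m, x (r + 1)) * gauge m p q x y 0 / gauge m p q x y m := by
  obtain ⟨n, rfl⟩ : ∃ n, m = n + 1 := ⟨m - 1, by omega⟩
  have hinterior : ∀ i, 1 ≤ i → i ≤ n → gauge (n + 1) p q x y i ≠ 0 := fun i hi hin => by
    obtain ⟨i, rfl⟩ := Nat.exists_eq_add_of_le' hi
    exact gauge_succ_ne_zero h (by omega)
  rw [Finset.prod_congr rfl fun r hr => bogSuperpose_succ h (Finset.mem_range.mp hr), mul_div_assoc,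
    ← Finset.prod_range_succ_div_of_ne_zero _ n hinterior, ← Finset.prod_mul_distrib]
  simp only [mul_div_assoc]

noncomputable def composedGauge (m : ℕ) (a b c : ℂ) (x y z : ℕ → ℂ) (s : ℕ) : ℂ :=
  gauge m a b x y s * gauge m a c (bogSuperpose m a b x y) (bogSuperpose m c b z y) s

theorem bogSuperpose_bogSuperpose_succ (hxy : bogDenomOK m a b x y)
    (h : bogDenomOK m a c (bogSuperpose m a b x y) (bogSuperpose m c b z y)) (hs : s + 1 ≤ m) :
    bogSuperpose m a c (bogSuperpose m a b x y) (bogSuperpose m c b z y) (s + 1)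
      = x (s + 1) * composedGauge m a b c x y z s / composedGauge m a b c x y z (s + 1) := by
  rw [bogSuperpose_succ h hs, bogSuperpose_succ hxy hs, composedGauge, composedGauge]
  ring

section Polynomials

variable {R : Type*} [CommRing R]

/-- `composedGauge` at `s + 1` is `composedGaugeNum / composedGaugeDen` evaluated at
`x_{s+1}, y_{s+1}, z_{s+1}` and the potentials `α, β, γ` of `x, y, z` at `s`; at `0` the same
numerator appears, evaluated at the potentials at `0` and at `m`. -/
def composedGaugeNum (a b c x y z α β γ : R) : R :=
  c * x * (b * α - a * β) * (b * z - c * y) - a * z * (b * γ - c * β) * (b * x - a * y)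

def composedGaugeDen (b c y z β γ : R) : R :=
  z * (b * γ - c * β) * (y - b) - c * β * (b * z - c * y)

theorem composedGaugeNum_swap (a b c x y z α β γ : R) :
    composedGaugeNum a c b x z y α γ β = -composedGaugeNum a b c x y z α β γ := by
  unfold composedGaugeNum
  ring

theorem composedGaugeDen_swap (b c y z β γ : R) :
    composedGaugeDen c b z y γ β = -composedGaugeDen b c y z β γ := by
  unfold composedGaugeDen
  ring

end Polynomials

theorem composedGauge_succ_eq_div (hxy : bogDenomOK m a b x y) (hzy : bogDenomOK m c b z y)
    (h : bogDenomOK m a c (bogSuperpose m a b x y) (bogSuperpose m c b z y)) (hs : s + 1 ≤ m) :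
    composedGauge m a b c x y z (s + 1)
      = (c * x (s + 1) * gauge m a b x y s * gauge m c b z y (s + 1)
          - a * z (s + 1) * gauge m c b z y s * gauge m a b x y (s + 1))
        / (z (s + 1) * gauge m c b z y s - c * gauge m c b z y (s + 1)) := by
  obtain ⟨-, hz', -⟩ := h (s + 1) (by omega) hs
  have hF := gauge_succ_ne_zero hxy hs
  have hG := gauge_succ_ne_zero hzy hs
  have hD : z (s + 1) * gauge m c b z y s - c * gauge m c b z y (s + 1) ≠ 0 := by
    intro hD
    apply hz'
    rw [bogSuperpose_succ hzy hs, div_eq_iff hG]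
    linear_combination hD
  rw [composedGauge, gauge_succ hz', bogSuperpose_succ hxy hs, bogSuperpose_succ hzy hs]
  field_simp

theorem composedGauge_succ (hxy : bogDenomOK m a b x y) (hzy : bogDenomOK m c b z y)
    (h : bogDenomOK m a c (bogSuperpose m a b x y) (bogSuperpose m c b z y))
    (hβ : potential m b y s ≠ 0) (hs : s + 1 ≤ m) :
    composedGauge m a b c x y z (s + 1)
      = composedGaugeNum a b c (x (s + 1)) (y (s + 1)) (z (s + 1))
          (potential m a x s) (potential m b y s) (potential m c z s)
        / composedGaugeDen b c (y (s + 1)) (z (s + 1)) (potential m b y s) (potential m c z s) := by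
  obtain ⟨-, hy, -⟩ := hxy (s + 1) (by omega) hs
  have hk : potential m b y s * (y (s + 1) - b) ≠ 0 := mul_ne_zero hβ (sub_ne_zero.mpr hy)
  rw [composedGauge_succ_eq_div hxy hzy h hs, ← mul_div_mul_right _ _ hk]
  congr 1
  · rw [gauge_succ hy, gauge_succ hy, gauge, gauge, composedGaugeNum]
    field_simp
  · rw [gauge_succ hy, gauge, composedGaugeDen]
    field_simp

theorem composedGauge_zero_eq_div (hxy : bogDenomOK m a b x y) (hzy : bogDenomOK m c b z y)
    (h : bogDenomOK m a c (bogSuperpose m a b x y) (bogSuperpose m c b z y)) (hm : 1 ≤ m) :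
    composedGauge m a b c x y z 0
      = (c * (∏ r ∈ Finset.range m, z (r + 1)) * gauge m c b z y 0 * gauge m a b x y m
          - a * (∏ r ∈ Finset.range m, x (r + 1)) * gauge m a b x y 0 * gauge m c b z y m)
        / ((∏ r ∈ Finset.range m, x (r + 1)) * gauge m c b z y m) := by
  obtain ⟨n, rfl⟩ : ∃ n, m = n + 1 := ⟨m - 1, by omega⟩
  have hX := prod_ne_zero_of_bogDenomOK hxy
  have hFm := gauge_succ_ne_zero hxy le_rfl
  have hGm := gauge_succ_ne_zero hzy le_rfl
  have hF₀ : gauge (n + 1) a b x y 0 ≠ 0 := by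
    intro hF₀
    apply (h 1 le_rfl hm).1
    rw [bogSuperpose_succ hxy hm, hF₀, mul_zero, zero_div]
  rw [composedGauge, gauge_zero h, prod_bogSuperpose hxy hm, prod_bogSuperpose hzy hm]
  field_simp

theorem composedGauge_zero (hxy : bogDenomOK m a b x y) (hzy : bogDenomOK m c b z y)
    (h : bogDenomOK m a c (bogSuperpose m a b x y) (bogSuperpose m c b z y))
    (hY : ∏ r ∈ Finset.range m, y (r + 1) ≠ 0) (hm : 1 ≤ m) :
    composedGauge m a b c x y z 0
      = composedGaugeNum a b c (potential m a x 0) (potential m b y 0) (potential m c z 0)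
          (potential m a x m) (potential m b y m) (potential m c z m)
        / (potential m b y 0 * potential m c z 0
            * (b * potential m c z m - c * potential m b y m)) := by
  have hα₀ : potential m a x 0 ≠ 0 := inv_ne_zero (prod_ne_zero_of_bogDenomOK hxy)
  have hβ₀ : potential m b y 0 ≠ 0 := inv_ne_zero hY
  have hγ₀ : potential m c z 0 ≠ 0 := inv_ne_zero (prod_ne_zero_of_bogDenomOK hzy)
  have hβm := potential_ne_zero hxy hY le_rfl
  have hk : potential m a x 0 * potential m b y 0 * potential m c z 0 * potential m b y m ≠ 0 := by
    positivity
  have eX : ∏ r ∈ Finset.range m, x (r + 1) = (potential m a x 0)⁻¹ := (inv_inv _).symm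
  have eZ : ∏ r ∈ Finset.range m, z (r + 1) = (potential m c z 0)⁻¹ := (inv_inv _).symm
  rw [composedGauge_zero_eq_div hxy hzy h hm, eX, eZ, ← mul_div_mul_right _ _ hk]
  congr 1
  · simp only [composedGaugeNum, gauge]
    field_simp
  · simp only [gauge]
    field_simp

theorem composedGauge_comm (h₁ : bogDenomOK m a b x y) (h₂ : bogDenomOK m c b z y)
    (h₃ : bogDenomOK m a c (bogSuperpose m a b x y) (bogSuperpose m c b z y))
    (h₄ : bogDenomOK m a c x z) (h₅ : bogDenomOK m b c y z)
    (h₆ : bogDenomOK m a b (bogSuperpose m a c x z) (bogSuperpose m b c y z))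
    (hm : 1 ≤ m) (hs : s ≤ m) :
    composedGauge m a b c x y z s = composedGauge m a c b x z y s := by
  have hY := prod_ne_zero_of_bogDenomOK h₅
  have hZ := prod_ne_zero_of_bogDenomOK h₂
  cases s with
  | zero =>
    rw [composedGauge_zero h₁ h₂ h₃ hY hm, composedGauge_zero h₄ h₅ h₆ hZ hm,
      composedGaugeNum_swap, neg_div, ← div_neg]
    congr 1
    ring
  | succ s =>
    rw [composedGauge_succ h₁ h₂ h₃ (potential_ne_zero h₁ hY (by omega)) hs,
      composedGauge_succ h₄ h₅ h₆ (potential_ne_zero h₄ hZ (by omega)) hs,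
      composedGaugeNum_swap, composedGaugeDen_swap, neg_div_neg_eq]

end Bogoyavlensky

theorem bogoyavlensky_superposition_3D_consistency_general
    (m : ℕ) (a b c : ℂ)
    (x y z : ℕ → ℂ)
    (h1 : bogDenomOK m a b x y)
    (h2 : bogDenomOK m c b z y)
    (h3 : bogDenomOK m a c (bogSuperpose m a b x y) (bogSuperpose m c b z y))
    (h4 : bogDenomOK m a c x z)
    (h5 : bogDenomOK m b c y z)
    (h6 : bogDenomOK m a b (bogSuperpose m a c x z) (bogSuperpose m b c y z)) :
    ∀ s, 1 ≤ s → s ≤ m →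
      bogSuperpose m a c (bogSuperpose m a b x y) (bogSuperpose m c b z y) s
        = bogSuperpose m a b (bogSuperpose m a c x z) (bogSuperpose m b c y z) s := by
  intro s hs hsm
  obtain ⟨s, rfl⟩ := Nat.exists_eq_add_of_le' hs
  have hm : 1 ≤ m := hs.trans hsm
  rw [Bogoyavlensky.bogSuperpose_bogSuperpose_succ h1 h3 hsm,
    Bogoyavlensky.bogSuperpose_bogSuperpose_succ h4 h6 hsm,
    Bogoyavlensky.composedGauge_comm h1 h2 h3 h4 h5 h6 hm (by omega),
    Bogoyavlensky.composedGauge_comm h1 h2 h3 h4 h5 h6 hm hsm]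

/-- 3D-consistency (Yang–Baxter property) of the superposition map of the
Bogoyavlensky lattice: `T_k T_j (f^{(i)}) = T_j T_k (f^{(i)})`. -/
theorem bogoyavlensky_superposition_3D_consistency
    (m : ℕ) (hm : 1 ≤ m) (a b c : ℂ)
    (ha : a ≠ 0) (hb : b ≠ 0) (hc : c ≠ 0)
    (hab : a ≠ b) (hac : a ≠ c) (hbc : b ≠ c)
    (x y z : ℕ → ℂ)
    (h1 : bogDenomOK m a b x y)
    (h2 : bogDenomOK m c b z y)
    (h3 : bogDenomOK m a c (bogSuperpose m a b x y) (bogSuperpose m c b z y))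
    (h4 : bogDenomOK m a c x z)
    (h5 : bogDenomOK m b c y z)
    (h6 : bogDenomOK m a b (bogSuperpose m a c x z) (bogSuperpose m b c y z)) :
    ∀ s, 1 ≤ s → s ≤ m →
      bogSuperpose m a c (bogSuperpose m a b x y) (bogSuperpose m c b z y) s
        = bogSuperpose m a b (bogSuperpose m a c x z) (bogSuperpose m b c y z) s :=
  bogoyavlensky_superposition_3D_consistency_general m a b c x y z h1 h2 h3 h4 h5 h6
end

section
/- Let m ≥ 1 be an integer. Let v : ℝ × ℤ → ℂ be differentiable in the time variable, with v(t,n) ≠ 0 for all t, n, and satisfy the potential Bogoyavlensky lattice ∂_t v(t,n) = v(t,n)·Σ_{s=0}^{m} v(t,n+m−s)/v(t,n−s) for all t and n. Then the function u(t,n) := v(t,n+m)/v(t,n) satisfies the Bogoyavlensky lattice ∂_t u(t,n) = u(t,n)·(Σ_{s=1}^{m} u(t,n+s) − Σ_{s=1}^{m} u(t,n−s)) for all t and n. -/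
/-!
The substitution `u = v_m / v` turns the potential lattice into the Bogoyavlensky lattice because
both are statements about logarithmic derivatives: `∂_t log u(n) = ∂_t log v(n+m) - ∂_t log v(n)`,
and each potential-lattice right-hand side `∑_{s=0}^m v(k+m-s)/v(k-s)` is the window sum
`∑_{s=0}^m u(k-s)`. The windows ending at `n+m` and at `n` share only the term `u(n)`, so their
difference is `∑_{s=1}^m u(n+s) - ∑_{s=1}^m u(n-s)`.
-/

open Finset

theorem HasDerivAt.div_of_self_mul {𝕜 𝕜' : Type*} [NontriviallyNormedField 𝕜]
    [NontriviallyNormedField 𝕜'] [NormedAlgebra 𝕜 𝕜'] {f g : 𝕜 → 𝕜'} {a b : 𝕜'} {x : 𝕜}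
    (hf : HasDerivAt f (f x * a) x) (hg : HasDerivAt g (g x * b) x) (hx : g x ≠ 0) :
    HasDerivAt (fun y => f y / g y) (f x / g x * (a - b)) x := by
  refine (hf.div hg hx).congr_deriv ?_
  field_simp

theorem Finset.sum_range_int_sub_eq_sum_range_add {M : Type*} [AddCommMonoid M]
    (w : ℤ → M) (n : ℤ) (m : ℕ) :
    ∑ s ∈ range m, w (n + m - s) = ∑ s ∈ range m, w (n + s + 1) := by
  induction m with
  | zero => simp
  | succ m ih =>
    rw [sum_range_succ', sum_range_succ, ← ih]
    congr 1
    · exact sum_congr rfl fun s _ => congrArg w (by push_cast; ring)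
    · exact congrArg w (by push_cast; ring)

theorem Finset.sum_range_succ_window_sub {M : Type*} [AddCommGroup M]
    (w : ℤ → M) (n : ℤ) (m : ℕ) :
    ∑ s ∈ range (m + 1), w (n + m - s) - ∑ s ∈ range (m + 1), w (n - s) =
      ∑ s ∈ range m, w (n + s + 1) - ∑ s ∈ range m, w (n - s - 1) := by
  rw [sum_range_succ, sum_range_succ', sum_range_int_sub_eq_sum_range_add]
  simp only [add_sub_cancel_right, Nat.cast_zero, sub_zero, Nat.cast_add, Nat.cast_one,
    sub_add_eq_sub_sub]
  abel

theorem potential_to_bogoyavlensky_general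
    (m : ℕ)
    (v : ℝ → ℤ → ℂ) (hv0 : ∀ (t : ℝ) (n : ℤ), v t n ≠ 0)
    (hv : ∀ (t : ℝ) (n : ℤ),
      HasDerivAt (fun τ => v τ n)
        (v t n * ∑ s ∈ Finset.range (m + 1), v t (n + m - s) / v t (n - s)) t)
    (u : ℝ → ℤ → ℂ)
    (hu : ∀ (t : ℝ) (n : ℤ), u t n = v t (n + m) / v t n) :
    ∀ (t : ℝ) (n : ℤ),
      HasDerivAt (fun τ => u τ n)
        (u t n *
          ((∑ s ∈ Finset.range m, u t (n + s + 1)) -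
            ∑ s ∈ Finset.range m, u t (n - s - 1))) t := by
  intro t n
  have hwindow (k : ℤ) : ∑ s ∈ range (m + 1), v t (k + m - s) / v t (k - s) =
      ∑ s ∈ range (m + 1), u t (k - s) :=
    sum_congr rfl fun s _ => by rw [hu, sub_add_eq_add_sub]
  have hquot := (hv t (n + m)).div_of_self_mul (hv t n) (hv0 t n)
  rw [hwindow, hwindow, sum_range_succ_window_sub] at hquot
  simpa only [← hu] using hquot

/-- The substitution `u = v_m / v` maps solutions of the potential Bogoyavlensky lattice
`∂_t v = v (v_m/v + v_{m-1}/v_{-1} + ⋯ + v/v_{-m})` into solutions of the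
Bogoyavlensky lattice. -/
theorem potential_to_bogoyavlensky
    (m : ℕ) (hm : 1 ≤ m)
    (v : ℝ → ℤ → ℂ) (hv0 : ∀ (t : ℝ) (n : ℤ), v t n ≠ 0)
    (hv : ∀ (t : ℝ) (n : ℤ),
      HasDerivAt (fun τ => v τ n)
        (v t n * ∑ s ∈ Finset.range (m + 1), v t (n + m - s) / v t (n - s)) t)
    (u : ℝ → ℤ → ℂ)
    (hu : ∀ (t : ℝ) (n : ℤ), u t n = v t (n + m) / v t n) :
    ∀ (t : ℝ) (n : ℤ),
      HasDerivAt (fun τ => u τ n)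
        (u t n *
          ((∑ s ∈ Finset.range m, u t (n + s + 1)) -
            ∑ s ∈ Finset.range m, u t (n - s - 1))) t :=
  potential_to_bogoyavlensky_general m v hv0 hv u hu
end

section
/- Let m ≥ 1 and let β⁽ⁱ⁾, β⁽ʲ⁾ ∈ ℂ be nonzero with β⁽ⁱ⁾ ≠ β⁽ʲ⁾. Let v, vⁱ, vʲ : ℤ → ℂ be nowhere-vanishing functions satisfying, for all n ∈ ℤ, the m-quad-equations ∏_{s=0}^{m}(v(n+s) − vⁱ(n+s)) = β⁽ⁱ⁾·(∏_{s=0}^{m−1} v(n+s))·vⁱ(n) and ∏_{s=0}^{m}(v(n+s) − vʲ(n+s)) = β⁽ʲ⁾·(∏_{s=0}^{m−1} v(n+s))·vʲ(n). Define P⁽ⁱ⁾(n) = ∏_{s=0}^{m−1}(v(n+s) − vⁱ(n+s)), P⁽ʲ⁾(n) = ∏_{s=0}^{m−1}(v(n+s) − vʲ(n+s)), and assume β⁽ʲ⁾P⁽ⁱ⁾(n) − β⁽ⁱ⁾P⁽ʲ⁾(n) ≠ 0 for all n, and define v^{ij}(n) := (β⁽ʲ⁾P⁽ⁱ⁾(n)·vʲ(n)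 − β⁽ⁱ⁾P⁽ʲ⁾(n)·vⁱ(n))/(β⁽ʲ⁾P⁽ⁱ⁾(n) − β⁽ⁱ⁾P⁽ʲ⁾(n)). Then, provided v^{ij} is nowhere vanishing: (a) for all n ∈ ℤ, (v^{ij}(n+1) − vʲ(n+1))/vʲ(n) + (vʲ(n+1) − vⁱ(n+1))/v(n) + (vⁱ(n+1) − v^{ij}(n+1))/vⁱ(n) = 0; and (b) for all n ∈ ℤ, ∏_{s=0}^{m}(vʲ(n+s) − v^{ij}(n+s)) = β⁽ⁱ⁾·(∏_{s=0}^{m−1} vʲ(n+s))·v^{ij}(n) and ∏_{s=0}^{m}(vⁱ(n+s) − v^{ij}(n+s)) = β⁽ʲ⁾·(∏_{s=0}^{m−1} vⁱ(n+s))·v^{ij}(n). -/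
/-!
By the superposition formula, `vⁱ - v^{ij} = β⁽ʲ⁾P⁽ⁱ⁾(vⁱ - vʲ)/D` and
`vʲ - v^{ij} = β⁽ⁱ⁾P⁽ʲ⁾(vⁱ - vʲ)/D` with `D = β⁽ʲ⁾P⁽ⁱ⁾ - β⁽ⁱ⁾P⁽ʲ⁾`, and the two
m-quad-equations for `v` make `D` satisfy a first-order recursion in `n`. Together these give
the local relation
`(vʲ_{n+1} - v^{ij}_{n+1}) vₙ (vⁱₙ - vʲₙ) = vʲₙ (vₙ - vⁱₙ)(vⁱ_{n+1} - vʲ_{n+1})`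
and its mirror image. The Hirota-type relation is a linear combination of the two, and taking
the product of the first over a window of length `m` telescopes into the m-quad-equation for
`(vʲ, v^{ij})`; the one for `(vⁱ, v^{ij})` follows by exchanging `i` and `j`, which leaves
`v^{ij}` unchanged.
-/

open Finset

section ShiftProd

variable {M : Type*} [CommMonoid M]

def shiftProd (m : ℕ) (f : ℤ → M) (n : ℤ) : M :=
  ∏ s ∈ range m, f (n + s)

lemma shiftProd_succ (m : ℕ) (f : ℤ → M) (n : ℤ) :
    shiftProd (m + 1) f n = shiftProd m f n * f (n + m) :=
  prod_range_succ _ _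

lemma shiftProd_succ' (m : ℕ) (f : ℤ → M) (n : ℤ) :
    shiftProd (m + 1) f n = shiftProd m f (n + 1) * f n := by
  simp only [shiftProd, prod_range_succ', Nat.cast_succ, Nat.cast_zero, add_zero]
  congr 1
  exact prod_congr rfl fun s _ => by rw [add_comm (s : ℤ), add_assoc]

lemma shiftProd_add_one_mul (m : ℕ) (f : ℤ → M) (n : ℤ) :
    shiftProd m f (n + 1) * f n = shiftProd m f n * f (n + m) := by
  rw [← shiftProd_succ, shiftProd_succ']

lemma shiftProd_mul (m : ℕ) (f g : ℤ → M) (n : ℤ) :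
    shiftProd m (f * g) n = shiftProd m f n * shiftProd m g n :=
  prod_mul_distrib

lemma shiftProd_add_one_mul_eq {f g f' g' : ℤ → M}
    (H : ∀ k, f (k + 1) * g k = g' k * f' (k + 1)) (m : ℕ) (n : ℤ) :
    shiftProd m f (n + 1) * shiftProd m g n = shiftProd m g' n * shiftProd m f' (n + 1) := by
  simp only [shiftProd, ← prod_mul_distrib]
  exact prod_congr rfl fun s _ => by rw [add_right_comm]; exact H _

end ShiftProd

section Superposition

variable {K : Type*} [Field K] {m : ℕ} {β βi βj : K} {v w vi vj : ℤ → K}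

lemma shiftProd_ne_zero {f : ℤ → K} (hf : ∀ k, f k ≠ 0) (m : ℕ) (n : ℤ) :
    shiftProd m f n ≠ 0 :=
  prod_ne_zero_iff.mpr fun _ _ => hf _

def IsMQuad (m : ℕ) (β : K) (v w : ℤ → K) : Prop :=
  ∀ n, shiftProd (m + 1) (v - w) n = β * shiftProd m v n * w n

lemma IsMQuad.shiftProd_add_one_mul (h : IsMQuad m β v w) (n : ℤ) :
    shiftProd m (v - w) (n + 1) * (v n - w n) = β * shiftProd m v n * w n := by
  rw [← h n, shiftProd_succ']
  rfl

lemma IsMQuad.shiftProd_mul_apply_add (h : IsMQuad m β v w) (n : ℤ) :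
    shiftProd m (v - w) n * (v (n + m) - w (n + m)) = β * shiftProd m v n * w n := by
  rw [← h n, shiftProd_succ]
  rfl

lemma IsMQuad.sub_ne_zero (h : IsMQuad m β v w) (hβ : β ≠ 0) (hv : ∀ n, v n ≠ 0)
    (hw : ∀ n, w n ≠ 0) (n : ℤ) : v n - w n ≠ 0 := by
  intro h0
  have := h.shiftProd_add_one_mul n
  rw [h0, mul_zero] at this
  exact mul_ne_zero (mul_ne_zero hβ (shiftProd_ne_zero hv m n)) (hw n) this.symm

def superpositionDenom (m : ℕ) (βi βj : K) (v vi vj : ℤ → K) (n : ℤ) : K :=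
  βj * shiftProd m (v - vi) n - βi * shiftProd m (v - vj) n

def superposition (m : ℕ) (βi βj : K) (v vi vj : ℤ → K) (n : ℤ) : K :=
  (βj * shiftProd m (v - vi) n * vj n - βi * shiftProd m (v - vj) n * vi n) /
    superpositionDenom m βi βj v vi vj n

lemma superpositionDenom_comm (n : ℤ) :
    superpositionDenom m βj βi v vj vi n = -superpositionDenom m βi βj v vi vj n := by
  simp only [superpositionDenom]
  ring

lemma superpositionDenom_ne_zero_comm {n : ℤ} (hD : superpositionDenom m βi βj v vi vj n ≠ 0) :
    superpositionDenom m βj βi v vj vi n ≠ 0 := by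
  rwa [superpositionDenom_comm, neg_ne_zero]

lemma superposition_comm :
    superposition m βj βi v vj vi = superposition m βi βj v vi vj := by
  funext n
  rw [superposition, superpositionDenom_comm, superposition, ← neg_div_neg_eq, neg_neg, neg_sub]

lemma superpositionDenom_add_one_mul (hqi : IsMQuad m βi v vi) (hqj : IsMQuad m βj v vj)
    (n : ℤ) :
    superpositionDenom m βi βj v vi vj (n + 1) * ((v n - vi n) * (v n - vj n))
      = βi * βj * shiftProd m v n * v n * (vi n - vj n) := by
  rw [superpositionDenom]
  linear_combination (βj * (v n - vj n)) * hqi.shiftProd_add_one_mul n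
    - (βi * (v n - vi n)) * hqj.shiftProd_add_one_mul n

lemma sub_superposition_mul_denom {n : ℤ} (hD : superpositionDenom m βi βj v vi vj n ≠ 0) :
    (vj n - superposition m βi βj v vi vj n) * superpositionDenom m βi βj v vi vj n
      = βi * shiftProd m (v - vj) n * (vi n - vj n) := by
  rw [sub_mul, superposition, div_mul_cancel₀ _ hD, superpositionDenom]
  ring

lemma superposition_mul_denom_mul_shiftProd (hqi : IsMQuad m βi v vi) (hqj : IsMQuad m βj v vj)
    {n : ℤ} (hD : superpositionDenom m βi βj v vi vj n ≠ 0) :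
    superposition m βi βj v vi vj n * superpositionDenom m βi βj v vi vj n * shiftProd m v n
      = shiftProd m (v - vi) n * shiftProd m (v - vj) n * (vi (n + m) - vj (n + m)) := by
  rw [superposition, div_mul_cancel₀ _ hD]
  linear_combination shiftProd m (v - vj) n * hqi.shiftProd_mul_apply_add n
    - shiftProd m (v - vi) n * hqj.shiftProd_mul_apply_add n

lemma sub_ne_zero_of_superpositionDenom_ne_zero (hqi : IsMQuad m βi v vi)
    (hqj : IsMQuad m βj v vj) (hβi : βi ≠ 0) (hβj : βj ≠ 0) (hv : ∀ n, v n ≠ 0)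
    (hvi : ∀ n, vi n ≠ 0) (hvj : ∀ n, vj n ≠ 0) {n : ℤ}
    (hD : superpositionDenom m βi βj v vi vj (n + 1) ≠ 0) : vi n - vj n ≠ 0 := by
  intro h0
  have := superpositionDenom_add_one_mul hqi hqj n
  rw [h0, mul_zero] at this
  exact mul_ne_zero hD (mul_ne_zero (hqi.sub_ne_zero hβi hv hvi n) (hqj.sub_ne_zero hβj hv hvj n))
    this

lemma sub_superposition_add_one (hqi : IsMQuad m βi v vi) (hqj : IsMQuad m βj v vj)
    (hβi : βi ≠ 0) (hβj : βj ≠ 0) (hv : ∀ n, v n ≠ 0) {n : ℤ}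
    (hD : superpositionDenom m βi βj v vi vj (n + 1) ≠ 0) :
    (vj (n + 1) - superposition m βi βj v vi vj (n + 1)) * (v n * (vi n - vj n))
      = vj n * (v n - vi n) * (vi (n + 1) - vj (n + 1)) := by
  refine mul_right_cancel₀ (mul_ne_zero (mul_ne_zero hβi hβj) (shiftProd_ne_zero hv m n)) ?_
  linear_combination (-(vj (n + 1) - superposition m βi βj v vi vj (n + 1)))
      * superpositionDenom_add_one_mul hqi hqj n
    + ((v n - vi n) * (v n - vj n)) * sub_superposition_mul_denom hD
    + (βi * (v n - vi n) * (vi (n + 1) - vj (n + 1))) * hqj.shiftProd_add_one_mul n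

lemma superposition_hirota (hqi : IsMQuad m βi v vi) (hqj : IsMQuad m βj v vj)
    (hβi : βi ≠ 0) (hβj : βj ≠ 0) (hv : ∀ n, v n ≠ 0) (hvi : ∀ n, vi n ≠ 0)
    (hvj : ∀ n, vj n ≠ 0) {n : ℤ} (hD : superpositionDenom m βi βj v vi vj (n + 1) ≠ 0) :
    (superposition m βi βj v vi vj (n + 1) - vj (n + 1)) / vj n
      + (vj (n + 1) - vi (n + 1)) / v n
      + (vi (n + 1) - superposition m βi βj v vi vj (n + 1)) / vi n = 0 := by
  have hj := sub_superposition_add_one hqi hqj hβi hβj hv hD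
  have hi := sub_superposition_add_one hqj hqi hβj hβi hv (superpositionDenom_ne_zero_comm hD)
  rw [superposition_comm] at hi
  have hg := sub_ne_zero_of_superpositionDenom_ne_zero hqi hqj hβi hβj hv hvi hvj hD
  rw [div_add_div _ _ (hvj n) (hv n), div_add_div _ _ (mul_ne_zero (hvj n) (hv n)) (hvi n),
    div_eq_zero_iff]
  refine Or.inl (mul_right_cancel₀ hg ?_)
  linear_combination (-vi n) * hj - vj n * hi

lemma isMQuad_superposition (hqi : IsMQuad m βi v vi) (hqj : IsMQuad m βj v vj)
    (hβi : βi ≠ 0) (hβj : βj ≠ 0) (hv : ∀ n, v n ≠ 0) (hvi : ∀ n, vi n ≠ 0)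
    (hvj : ∀ n, vj n ≠ 0) (hD : ∀ n, superpositionDenom m βi βj v vi vj n ≠ 0) :
    IsMQuad m βi vj (superposition m βi βj v vi vj) := by
  intro n
  have hg : ∀ k, vi k - vj k ≠ 0 := fun k =>
    sub_ne_zero_of_superpositionDenom_ne_zero hqi hqj hβi hβj hv hvi hvj (hD (k + 1))
  have hwindow := shiftProd_add_one_mul_eq (f := vj - superposition m βi βj v vi vj)
    (g := v * (vi - vj)) (g' := vj * (v - vi)) (f' := vi - vj)
    (fun k => sub_superposition_add_one hqi hqj hβi hβj hv (hD (k + 1))) m n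
  have htelescope := shiftProd_add_one_mul m (vi - vj) n
  simp only [shiftProd_mul] at hwindow
  simp only [Pi.sub_apply] at htelescope
  have hE := sub_superposition_mul_denom (hD n)
  have hK := superposition_mul_denom_mul_shiftProd hqi hqj (hD n)
  rw [shiftProd_succ', Pi.sub_apply]
  -- clear `D · ∏ v · ∏ (vⁱ - vʲ)`; `hK` then identifies what the telescoped window leaves over
  refine mul_right_cancel₀ (mul_ne_zero (mul_ne_zero (hD n) (shiftProd_ne_zero hv m n))
    (shiftProd_ne_zero (f := vi - vj) hg m n)) ?_
  linear_combination
    (vj n - superposition m βi βj v vi vj n) * superpositionDenom m βi βj v vi vj n * hwindow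
    + shiftProd m vj n * shiftProd m (v - vi) n * shiftProd m (vi - vj) (n + 1) * hE
    + βi * shiftProd m (v - vj) n * shiftProd m vj n * shiftProd m (v - vi) n * htelescope
    - βi * shiftProd m vj n * shiftProd m (vi - vj) n * hK

end Superposition

theorem potential_bogoyavlensky_superposition_general
    (m : ℕ) (βi βj : ℂ) (hβi : βi ≠ 0) (hβj : βj ≠ 0)
    (v vi vj : ℤ → ℂ)
    (hv0 : ∀ n : ℤ, v n ≠ 0) (hvi0 : ∀ n : ℤ, vi n ≠ 0) (hvj0 : ∀ n : ℤ, vj n ≠ 0)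
    (hqi : ∀ n : ℤ,
      ∏ s ∈ Finset.range (m + 1), (v (n + s) - vi (n + s))
        = βi * (∏ s ∈ Finset.range m, v (n + s)) * vi n)
    (hqj : ∀ n : ℤ,
      ∏ s ∈ Finset.range (m + 1), (v (n + s) - vj (n + s))
        = βj * (∏ s ∈ Finset.range m, v (n + s)) * vj n)
    (Pi Pj : ℤ → ℂ)
    (hPi : ∀ n : ℤ, Pi n = ∏ s ∈ Finset.range m, (v (n + s) - vi (n + s)))
    (hPj : ∀ n : ℤ, Pj n = ∏ s ∈ Finset.range m, (v (n + s) - vj (n + s)))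
    (hD : ∀ n : ℤ, βj * Pi n - βi * Pj n ≠ 0)
    (vij : ℤ → ℂ)
    (hvij : ∀ n : ℤ,
      vij n = (βj * Pi n * vj n - βi * Pj n * vi n) / (βj * Pi n - βi * Pj n)) :
    (∀ n : ℤ,
      (vij (n + 1) - vj (n + 1)) / vj n + (vj (n + 1) - vi (n + 1)) / v n
        + (vi (n + 1) - vij (n + 1)) / vi n = 0)
    ∧ (∀ n : ℤ,
      ∏ s ∈ Finset.range (m + 1), (vj (n + s) - vij (n + s))
        = βi * (∏ s ∈ Finset.range m, vj (n + s)) * vij n)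
    ∧ (∀ n : ℤ,
      ∏ s ∈ Finset.range (m + 1), (vi (n + s) - vij (n + s))
        = βj * (∏ s ∈ Finset.range m, vi (n + s)) * vij n) := by
  obtain rfl : Pi = shiftProd m (v - vi) := funext hPi
  obtain rfl : Pj = shiftProd m (v - vj) := funext hPj
  obtain rfl : vij = superposition m βi βj v vi vj := funext hvij
  have hqi : IsMQuad m βi v vi := hqi
  have hqj : IsMQuad m βj v vj := hqj
  refine ⟨fun n => superposition_hirota hqi hqj hβi hβj hv0 hvi0 hvj0 (hD (n + 1)),
    isMQuad_superposition hqi hqj hβi hβj hv0 hvi0 hvj0 hD, ?_⟩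
  rw [← superposition_comm]
  exact isMQuad_superposition hqj hqi hβj hβi hv0 hvj0 hvi0
    fun n => superpositionDenom_ne_zero_comm (hD n)

/-- Core of the multidimensional consistency theorem for the Bäcklund transformation of
the potential Bogoyavlensky lattice: the superposition formula
`v^{ij} = (β⁽ʲ⁾P⁽ⁱ⁾vʲ - β⁽ⁱ⁾P⁽ʲ⁾vⁱ)/(β⁽ʲ⁾P⁽ⁱ⁾ - β⁽ⁱ⁾P⁽ʲ⁾)` satisfies the Hirota-type
relations and both shifted m-quad-equations. -/
theorem potential_bogoyavlensky_superposition
    (m : ℕ) (hm : 1 ≤ m) (βi βj : ℂ) (hβi : βi ≠ 0) (hβj : βj ≠ 0) (hββ : βi ≠ βj)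
    (v vi vj : ℤ → ℂ)
    (hv0 : ∀ n : ℤ, v n ≠ 0) (hvi0 : ∀ n : ℤ, vi n ≠ 0) (hvj0 : ∀ n : ℤ, vj n ≠ 0)
    (hqi : ∀ n : ℤ,
      ∏ s ∈ Finset.range (m + 1), (v (n + s) - vi (n + s))
        = βi * (∏ s ∈ Finset.range m, v (n + s)) * vi n)
    (hqj : ∀ n : ℤ,
      ∏ s ∈ Finset.range (m + 1), (v (n + s) - vj (n + s))
        = βj * (∏ s ∈ Finset.range m, v (n + s)) * vj n)
    (Pi Pj : ℤ → ℂ)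
    (hPi : ∀ n : ℤ, Pi n = ∏ s ∈ Finset.range m, (v (n + s) - vi (n + s)))
    (hPj : ∀ n : ℤ, Pj n = ∏ s ∈ Finset.range m, (v (n + s) - vj (n + s)))
    (hD : ∀ n : ℤ, βj * Pi n - βi * Pj n ≠ 0)
    (vij : ℤ → ℂ)
    (hvij : ∀ n : ℤ,
      vij n = (βj * Pi n * vj n - βi * Pj n * vi n) / (βj * Pi n - βi * Pj n))
    (hvij0 : ∀ n : ℤ, vij n ≠ 0) :
    (∀ n : ℤ,
      (vij (n + 1) - vj (n + 1)) / vj n + (vj (n + 1) - vi (n + 1)) / v n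
        + (vi (n + 1) - vij (n + 1)) / vi n = 0)
    ∧ (∀ n : ℤ,
      ∏ s ∈ Finset.range (m + 1), (vj (n + s) - vij (n + s))
        = βi * (∏ s ∈ Finset.range m, vj (n + s)) * vij n)
    ∧ (∀ n : ℤ,
      ∏ s ∈ Finset.range (m + 1), (vi (n + s) - vij (n + s))
        = βj * (∏ s ∈ Finset.range m, vi (n + s)) * vij n) :=
  potential_bogoyavlensky_superposition_general m βi βj hβi hβj v vi vj hv0 hvi0 hvj0 hqi hqj Pi Pj
    hPi hPj hD vij hvij
end

section
/- Let m ≥ 1, α ∈ ℂ, λ ∈ ℂ with λ ≠ 0, and let f : ℤ → ℂ. Define g(n) = ∏_{s=1}^{m−1} f(n+s) − α and G(n) = ∏_{s=0}^{m} f(n+s) − α, and assume G(n) ≠ 0 and f(n) ≠ 0 for all n. Set u(n) = g(n)·f(n)/G(n). Suppose ψ : ℤ → ℂ satisfies u(n)·ψ(n+m+1) − ψ(n+m) + λ·(ψ(n+1) − u(n)·ψ(n)) = 0 for all n ∈ ℤ. Then the function χ(n) := ψ(n+1) − f(n)·ψ(n) satisfies, for all n ∈ ℤ, (1 − f(n+m)·f(n))·(f(n+1)·g(n+1)·χ(n+m+1)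 + λ·G(n+1)·χ(n+1)) = (1 − f(n+m+1)·f(n+1))·(G(n)·χ(n+m) + λ·f(n+m)·g(n)·χ(n)). -/
/-- Darboux transformation for the spectral problem of the integrable discretization of
the Sawada–Kotera equation: `χ = ψ_1 - f ψ` solves the intermediate equation
`(1 - f_m f)(f_1 g_1 χ_{m+1} + λ G_1 χ_1) = (1 - f_{m+1} f_1)(G χ_m + λ f_m g χ)`. -/
theorem dSK_darboux_first_substitution
    (m : ℕ) (hm : 1 ≤ m) (α lam : ℂ) (hlam : lam ≠ 0)
    (f : ℤ → ℂ) (hf0 : ∀ n : ℤ, f n ≠ 0)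
    (g G : ℤ → ℂ)
    (hg : ∀ n : ℤ, g n = (∏ s ∈ Finset.range (m - 1), f (n + s + 1)) - α)
    (hG : ∀ n : ℤ, G n = (∏ s ∈ Finset.range (m + 1), f (n + s)) - α)
    (hG0 : ∀ n : ℤ, G n ≠ 0)
    (u : ℤ → ℂ) (hu : ∀ n : ℤ, u n = g n * f n / G n)
    (ψ : ℤ → ℂ)
    (hψ : ∀ n : ℤ,
      u n * ψ (n + m + 1) - ψ (n + m) + lam * (ψ (n + 1) - u n * ψ n) = 0)
    (χ : ℤ → ℂ)
    (hχ : ∀ n : ℤ, χ n = ψ (n + 1) - f n * ψ n) :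
    ∀ n : ℤ,
      (1 - f (n + m) * f n) *
          (f (n + 1) * g (n + 1) * χ (n + m + 1) + lam * G (n + 1) * χ (n + 1))
        = (1 - f (n + m + 1) * f (n + 1)) *
            (G n * χ (n + m) + lam * f (n + m) * g n * χ n) := by
  obtain ⟨k, rfl⟩ : ∃ k, m = k + 1 := ⟨m - 1, (Nat.succ_pred_eq_of_pos hm).symm⟩
  simp only [Nat.add_sub_cancel] at hg
  intro n
  -- product relations
  have key1 : ∀ j : ℤ, (∏ s ∈ Finset.range (k + 1 + 1), f (j + s))
      = f j * f (j + k + 1) * ∏ s ∈ Finset.range k, f (j + s + 1) := by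
    intro j
    rw [Finset.prod_range_succ, Finset.prod_range_succ']
    push_cast
    rw [show j + ((k : ℤ) + 1) = j + k + 1 by ring, add_zero]
    rw [show (∏ x ∈ Finset.range k, f (j + ((x:ℤ) + 1))) = ∏ x ∈ Finset.range k, f (j + x + 1) from
      Finset.prod_congr rfl (fun s _ => by ring_nf)]
    ring
  have key3 : f (n + 1) * (∏ s ∈ Finset.range k, f (n + 1 + s + 1))
      = (∏ s ∈ Finset.range k, f (n + s + 1)) * f (n + k + 1) := by
    have h1 := Finset.prod_range_succ' (fun s : ℕ => f (n + s + 1)) k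
    have h2 := Finset.prod_range_succ (fun s : ℕ => f (n + s + 1)) k
    push_cast at h1 h2
    rw [add_zero] at h1
    rw [h2] at h1
    rw [show (∏ x ∈ Finset.range k, f (n + ((x:ℤ) + 1) + 1)) = ∏ x ∈ Finset.range k, f (n + 1 + x + 1) from
      Finset.prod_congr rfl (fun s _ => by ring_nf)] at h1
    rw [h1, mul_comm]
  have hR1 : G n + α = f n * f (n + k + 1) * (g n + α) := by
    rw [hG n, hg n, key1 n]; ring
  have hR2 : G (n + 1) + α = f (n + 1) * f (n + k + 2) * (g (n + 1) + α) := by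
    rw [hG (n + 1), hg (n + 1), key1 (n + 1),
      show n + 1 + (k : ℤ) + 1 = n + k + 2 by ring]
    ring
  have hR3 : f (n + 1) * (g (n + 1) + α) = f (n + k + 1) * (g n + α) := by
    rw [hg (n + 1), hg n, sub_add_cancel, sub_add_cancel, key3, mul_comm]
  have hE1 : g n * f n * ψ (n + k + 2) - G n * ψ (n + k + 1)
      + lam * (G n * ψ (n + 1) - g n * f n * ψ n) = 0 := by
    have h := hψ n
    rw [hu n] at h
    push_cast at h
    rw [show n + ((k : ℤ) + 1) + 1 = n + k + 2 by ring,
      show n + ((k : ℤ) + 1) = n + k + 1 by ring] at h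
    field_simp [hG0 n] at h
    linear_combination h
  have hE2 : g (n + 1) * f (n + 1) * ψ (n + k + 3) - G (n + 1) * ψ (n + k + 2)
      + lam * (G (n + 1) * ψ (n + 2) - g (n + 1) * f (n + 1) * ψ (n + 1)) = 0 := by
    have h := hψ (n + 1)
    rw [hu (n + 1)] at h
    push_cast at h
    rw [show n + 1 + ((k : ℤ) + 1) + 1 = n + k + 3 by ring,
      show n + 1 + ((k : ℤ) + 1) = n + k + 2 by ring,
      show n + 1 + (1 : ℤ) = n + 2 by ring] at h
    field_simp [hG0 (n + 1)] at h
    linear_combination h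
  push_cast
  rw [show n + ((k : ℤ) + 1) + 1 = n + k + 2 by ring,
    show n + ((k : ℤ) + 1) = n + k + 1 by ring]
  simp only [hχ]
  rw [show n + (k : ℤ) + 2 + 1 = n + k + 3 by ring,
    show n + (k : ℤ) + 1 + 1 = n + k + 2 by ring,
    show n + (1 : ℤ) + 1 = n + 2 by ring]
  linear_combination
    (-(1 - f (n + k + 2) * f (n + 1)) * f (n + k + 1)) * hE1
    + (1 - f n * f (n + k + 1)) * hE2
    - ((1 - f (n + 1) * f (n + k + 2)) * ψ (n + k + 2)
        - lam * f (n + k + 1) * (1 - f (n + 1) * f (n + k + 2)) * ψ (n + 1)) * hR1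
    - (-(1 - f n * f (n + k + 1)) * ψ (n + k + 2)
        + lam * f (n + 1) * (1 - f n * f (n + k + 1)) * ψ (n + 1)) * hR2
    + lam * (1 - f n * f (n + k + 1)) * (1 - f (n + 1) * f (n + k + 2)) * ψ (n + 1) * hR3
end

section
/- Let m ≥ 1, α ∈ ℂ, λ ∈ ℂ with λ ≠ 0, and let f : ℤ → ℂ. Define g(n) = ∏_{s=1}^{m−1} f(n+s) − α and G(n) = ∏_{s=0}^{m} f(n+s) − α, and assume G(n) ≠ 0 and f(n) ≠ 0 for all n. Set ũ(n) = g(n)·f(n+m)/G(n). Suppose ψ̃ : ℤ → ℂ satisfies ũ(n)·ψ̃(n+m+1) − ψ̃(n+m) + λ·(ψ̃(n+1) − ũ(n)·ψ̃(n)) = 0 for all n ∈ ℤ. Then the function χ(n) := ψ̃(n) − f(n)·ψ̃(n+1) satisfies, for all n ∈ ℤ, (1 − f(n+m)·f(n))·(f(n+1)·g(n+1)·χ(n+m+1) + λ·G(n+1)·χ(n+1)) = (1 − f(n+m+1)·f(n+1))·(G(n)·χ(n+m) + λ·f(n+m)·g(n)·χ(n)). -/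
/-!
Write `P n = f (n+1) ⋯ f (n+m-1)`, so that `g = P - α` and `G n = f n * P n * f (n+m) - α`.
Multiplying the spectral problem by `G` clears its denominator and leaves an equation that is
polynomial in `f`, `P` and `ψ̃`. The intermediate equation is then a linear combination of
this equation at `n` and at `n + 1`, once the two consecutive window products are related by
`P n * f (n+m) = f (n+1) * P (n+1)`.
-/

open Finset

section WindowProducts

variable {M : Type*} [CommMonoid M] (f : ℤ → M) (n : ℤ) (k : ℕ)

theorem prod_range_add_two_int :
    ∏ s ∈ range (k + 2), f (n + s) = f n * (∏ s ∈ range k, f (n + s + 1)) * f (n + k + 1) := by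
  rw [prod_range_succ, prod_range_succ']
  push_cast
  simp only [add_zero, add_assoc, mul_comm (f n)]

theorem prod_range_mul_eq_mul_prod_range_shift :
    (∏ s ∈ range k, f (n + s + 1)) * f (n + k + 1)
      = f (n + 1) * ∏ s ∈ range k, f (n + 1 + s + 1) := by
  rw [← prod_range_succ (fun s : ℕ => f (n + s + 1)), prod_range_succ', mul_comm]
  push_cast
  simp only [add_zero]
  congr 1
  exact prod_congr rfl fun s _ => by congr 1; ring

end WindowProducts

theorem intermediate_equation {R : Type*} [CommRing R] (m : ℤ) (α lam : R)
    (f P g G ψ χ : ℤ → R)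
    (hP : ∀ n, P n * f (n + m) = f (n + 1) * P (n + 1))
    (hg : ∀ n, g n = P n - α) (hG : ∀ n, G n = f n * P n * f (n + m) - α)
    (hψ : ∀ n, g n * f (n + m) * ψ (n + m + 1) - G n * ψ (n + m)
      + lam * (G n * ψ (n + 1) - g n * f (n + m) * ψ n) = 0)
    (hχ : ∀ n, χ n = ψ n - f n * ψ (n + 1)) (n : ℤ) :
    (1 - f (n + m) * f n) *
        (f (n + 1) * g (n + 1) * χ (n + m + 1) + lam * G (n + 1) * χ (n + 1))
      = (1 - f (n + m + 1) * f (n + 1)) *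
          (G n * χ (n + m) + lam * f (n + m) * g n * χ n) := by
  have e₀ := hψ n
  have e₁ := hψ (n + 1)
  simp only [hχ, hg, hG, add_right_comm n 1 m] at e₀ e₁ ⊢
  linear_combination (1 - f (n + m + 1) * f (n + 1)) * e₀
    - (1 - f (n + m) * f n) * f (n + 1) * e₁
    - (1 - f (n + 1) * f (n + m + 1)) * (1 - f (n + m) * f n) * ψ (n + m + 1) * hP n

theorem dSK_darboux_second_substitution_general
    (m : ℕ) (hm : 1 ≤ m) (α lam : ℂ)
    (f : ℤ → ℂ)
    (g G : ℤ → ℂ)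
    (hg : ∀ n : ℤ, g n = (∏ s ∈ Finset.range (m - 1), f (n + s + 1)) - α)
    (hG : ∀ n : ℤ, G n = (∏ s ∈ Finset.range (m + 1), f (n + s)) - α)
    (hG0 : ∀ n : ℤ, G n ≠ 0)
    (u' : ℤ → ℂ) (hu' : ∀ n : ℤ, u' n = g n * f (n + m) / G n)
    (ψ' : ℤ → ℂ)
    (hψ' : ∀ n : ℤ,
      u' n * ψ' (n + m + 1) - ψ' (n + m) + lam * (ψ' (n + 1) - u' n * ψ' n) = 0)
    (χ : ℤ → ℂ)
    (hχ : ∀ n : ℤ, χ n = ψ' n - f n * ψ' (n + 1)) :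
    ∀ n : ℤ,
      (1 - f (n + m) * f n) *
          (f (n + 1) * g (n + 1) * χ (n + m + 1) + lam * G (n + 1) * χ (n + 1))
        = (1 - f (n + m + 1) * f (n + 1)) *
            (G n * χ (n + m) + lam * f (n + m) * g n * χ n) := by
  obtain ⟨k, rfl⟩ := Nat.exists_eq_add_of_le' hm
  set P : ℤ → ℂ := fun n => ∏ s ∈ range k, f (n + s + 1)
  have hP (n : ℤ) : P n * f (n + ↑(k + 1)) = f (n + 1) * P (n + 1) := by
    rw [Nat.cast_succ, ← add_assoc]
    exact prod_range_mul_eq_mul_prod_range_shift f n k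
  have hGP (n : ℤ) : G n = f n * P n * f (n + ↑(k + 1)) - α := by
    rw [hG, Nat.cast_succ, ← add_assoc]
    exact congrArg (· - α) (prod_range_add_two_int f n k)
  have hcleared (n : ℤ) : g n * f (n + ↑(k + 1)) * ψ' (n + ↑(k + 1) + 1)
      - G n * ψ' (n + ↑(k + 1))
      + lam * (G n * ψ' (n + 1) - g n * f (n + ↑(k + 1)) * ψ' n) = 0 := by
    have hu'G : u' n * G n = g n * f (n + ↑(k + 1)) := by
      rw [hu']; exact div_mul_cancel₀ _ (hG0 n)
    linear_combination G n * hψ' n + (lam * ψ' n - ψ' (n + ↑(k + 1) + 1)) * hu'G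
  exact intermediate_equation _ α lam f P g G ψ' χ hP hg hGP hcleared hχ

/-- Darboux transformation for the spectral problem of the integrable discretization of
the Sawada–Kotera equation: `χ = ψ̃ - f ψ̃_1` solves the intermediate equation
`(1 - f_m f)(f_1 g_1 χ_{m+1} + λ G_1 χ_1) = (1 - f_{m+1} f_1)(G χ_m + λ f_m g χ)`. -/
theorem dSK_darboux_second_substitution
    (m : ℕ) (hm : 1 ≤ m) (α lam : ℂ) (hlam : lam ≠ 0)
    (f : ℤ → ℂ) (hf0 : ∀ n : ℤ, f n ≠ 0)
    (g G : ℤ → ℂ)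
    (hg : ∀ n : ℤ, g n = (∏ s ∈ Finset.range (m - 1), f (n + s + 1)) - α)
    (hG : ∀ n : ℤ, G n = (∏ s ∈ Finset.range (m + 1), f (n + s)) - α)
    (hG0 : ∀ n : ℤ, G n ≠ 0)
    (u' : ℤ → ℂ) (hu' : ∀ n : ℤ, u' n = g n * f (n + m) / G n)
    (ψ' : ℤ → ℂ)
    (hψ' : ∀ n : ℤ,
      u' n * ψ' (n + m + 1) - ψ' (n + m) + lam * (ψ' (n + 1) - u' n * ψ' n) = 0)
    (χ : ℤ → ℂ)
    (hχ : ∀ n : ℤ, χ n = ψ' n - f n * ψ' (n + 1)) :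
    ∀ n : ℤ,
      (1 - f (n + m) * f n) *
          (f (n + 1) * g (n + 1) * χ (n + m + 1) + lam * G (n + 1) * χ (n + 1))
        = (1 - f (n + m + 1) * f (n + 1)) *
            (G n * χ (n + m) + lam * f (n + m) * g n * χ n) :=
  dSK_darboux_second_substitution_general m hm α lam f g G hg hG hG0 u' hu' ψ' hψ' χ hχ
end

section
/- Let m ≥ 1 and α ∈ ℂ. Let f : ℝ × ℤ → ℂ be differentiable in the time variable; define g(t,n) = ∏_{s=1}^{m−1} f(t,n+s) − α and G(t,n) = ∏_{s=0}^{m} f(t,n+s) − α, and assume G(t,n) ≠ 0 for all t, n. Suppose f satisfies ∂_t f(t,n) = f(t,n)·(∏_{s=1}^{m−1} g(t,n−s))/(∏_{s=0}^{m} G(t,n−s))·(g(t,n)·g(t,n−m)·(G(t,n) − G(t,n−m)) − G(t,n)·G(t,n−m)·(g(t,n) − g(t,n−m))) for all t, n. Then the function u(t,n) := g(t,n)·f(t,n)/G(t,n) satisfies ∂_t u(t,n) = u(t,n)²·(∏_{s=1}^{m} u(t,n+s) − ∏_{s=1}^{m} u(t,n−s)) − u(t,n)·(∏_{s=1}^{m−1}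 u(t,n+s) − ∏_{s=1}^{m−1} u(t,n−s)) for all t, n. -/
/-!
The modified equation reads `∂_t f_k = f_k S_k`; hence `g_n + α` and `G_n + α`, being products
of the `f_k`, have as logarithmic derivatives the sums of `S` over their windows, and `∂_t u_n`
follows from the quotient rule. The nonlocal sums of `S` are tamed by a discrete conservation law:
`α S_k = Φ_{k-m} - Φ_{k-m+1}` with
`Φ_j = g_j ⋯ g_{j+m-1} (f_j ⋯ f_{j+2m-1} - α²) / (G_j ⋯ G_{j+m-1})`,
so `α` times the sum of `S` over the window of `g_n` telescopes to `Φ_{n-m+1} - Φ_n`.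
What remains splits into the terms involving sites left of `n` and those involving sites right
of `n`; each part is a rational identity once `f_{n-m} ⋯ f_n = G_{n-m} + α` and
`f_n ⋯ f_{n+m} = G_n + α` are substituted.
-/

open Finset

section Window

variable {R : Type*} [CommMonoid R]

def window (v : ℤ → R) (j : ℤ) (L : ℕ) : R := ∏ s ∈ range L, v (j + s)

theorem window_add (v : ℤ → R) (j : ℤ) (a b : ℕ) :
    window v j (a + b) = window v j a * window v (j + a) b := by
  simp only [window, prod_range_add, Nat.cast_add, add_assoc]

theorem window_succ (v : ℤ → R) (j : ℤ) (L : ℕ) :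
    window v j (L + 1) = window v j L * v (j + L) :=
  prod_range_succ _ _

theorem window_succ' (v : ℤ → R) (j : ℤ) (L : ℕ) :
    window v j (L + 1) = v j * window v (j + 1) L := by
  rw [window, prod_range_succ', mul_comm, Nat.cast_zero, add_zero]
  exact congrArg _ (prod_congr rfl fun s _ => by push_cast; ring_nf)

theorem prod_range_add_add_one_eq_window (v : ℤ → R) (k : ℤ) (L : ℕ) :
    ∏ s ∈ range L, v (k + s + 1) = window v (k + 1) L :=
  prod_congr rfl fun s _ => by rw [add_right_comm]

theorem prod_range_sub_sub_one_eq_window (v : ℤ → R) (k : ℤ) (L : ℕ) :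
    ∏ s ∈ range L, v (k - s - 1) = window v (k - L) L := by
  rw [window, ← prod_range_reflect]
  refine prod_congr rfl fun s hs => ?_
  have := mem_range.mp hs
  congr 1
  omega

theorem prod_range_sub_eq_window (v : ℤ → R) (k : ℤ) (L : ℕ) :
    ∏ s ∈ range L, v (k - s) = window v (k - L + 1) L := by
  rw [sub_add_eq_add_sub, ← prod_range_sub_sub_one_eq_window]
  exact prod_congr rfl fun s _ => by ring_nf

theorem sum_range_add_two_eq {A : Type*} [AddCommMonoid A] (S : ℤ → A) (n : ℤ) (L : ℕ) :
    ∑ s ∈ range (L + 2), S (n + s) =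
      S n + ∑ s ∈ range L, S (n + 1 + s) + S (n + L + 1) := by
  rw [sum_range_succ, sum_range_succ', Nat.cast_zero, add_zero, add_comm (∑ s ∈ range L, _)]
  push_cast
  simp only [add_comm (1 : ℤ), add_assoc]

end Window

theorem HasDerivAt.fun_finsetProd_mul_sum {𝕜 𝔸 ι : Type*} [NontriviallyNormedField 𝕜]
    [NormedCommRing 𝔸] [NormedAlgebra 𝕜 𝔸] {u : Finset ι} {f : ι → 𝕜 → 𝔸} {S : ι → 𝔸} {x : 𝕜}
    (hf : ∀ i ∈ u, HasDerivAt (f i) (f i x * S i) x) :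
    HasDerivAt (∏ i ∈ u, f i ·) ((∏ i ∈ u, f i x) * ∑ i ∈ u, S i) x := by
  classical
  convert HasDerivAt.fun_finsetProd hf using 1
  rw [mul_sum]
  refine sum_congr rfl fun i hi => ?_
  rw [smul_eq_mul, ← mul_assoc, prod_erase_mul _ _ hi]

theorem hasDerivAt_window {𝕜 𝔸 : Type*} [NontriviallyNormedField 𝕜] [NormedCommRing 𝔸]
    [NormedAlgebra 𝕜 𝔸] {f : 𝕜 → ℤ → 𝔸} {S : ℤ → 𝔸} {x : 𝕜}
    (hf : ∀ k, HasDerivAt (f · k) (f x k * S k) x) (j : ℤ) (L : ℕ) :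
    HasDerivAt (fun τ => window (f τ) j L) (window (f x) j L * ∑ s ∈ range L, S (j + s)) x :=
  HasDerivAt.fun_finsetProd_mul_sum fun s _ => hf (j + s)

noncomputable section Lattice

variable (M : ℕ) (α : ℂ) (f : ℤ → ℂ)

-- With `m = M + 1`, `trimmedProd`, `fullProd`, `miura`, `modifiedRate` and `flux` are the
-- `g`, `G`, `u`, `S` and `Φ` above.
def trimmedProd (n : ℤ) : ℂ := window f (n + 1) M - α

def fullProd (n : ℤ) : ℂ := window f n (M + 2) - α

def miura (n : ℤ) : ℂ := trimmedProd M α f n * f n / fullProd M α f n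

def modifiedRate (k : ℤ) : ℂ :=
  window (trimmedProd M α f) (k - M) M / window (fullProd M α f) (k - M - 1) (M + 2) *
    (trimmedProd M α f k * trimmedProd M α f (k - M - 1) *
        (fullProd M α f k - fullProd M α f (k - M - 1)) -
      fullProd M α f k * fullProd M α f (k - M - 1) *
        (trimmedProd M α f k - trimmedProd M α f (k - M - 1)))

def flux (j : ℤ) : ℂ :=
  window (trimmedProd M α f) j (M + 1) * (window f j (2 * M + 2) - α ^ 2) /
    window (fullProd M α f) j (M + 1)

theorem trimmedProd_add (n : ℤ) : trimmedProd M α f n + α = window f (n + 1) M :=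
  sub_add_cancel _ _

theorem fullProd_add (n : ℤ) : fullProd M α f n + α = window f n (M + 2) :=
  sub_add_cancel _ _

theorem window_two_mul_eq_fullProd_mul (j : ℤ) :
    window f j (2 * M + 2) = (fullProd M α f j + α) * (trimmedProd M α f (j + M + 1) + α) := by
  rw [fullProd_add, trimmedProd_add, show 2 * M + 2 = M + 2 + M by ring, window_add]
  push_cast
  ring_nf

theorem window_two_mul_eq_trimmedProd_mul (j : ℤ) :
    window f j (2 * M + 2) = (trimmedProd M α f (j - 1) + α) * (fullProd M α f (j + M) + α) := by
  rw [fullProd_add, trimmedProd_add, sub_add_cancel, show 2 * M + 2 = M + (M + 2) by ring,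
    window_add]

variable {M α f}

theorem window_fullProd_ne_zero (hG0 : ∀ n, fullProd M α f n ≠ 0) (j : ℤ) (L : ℕ) :
    window (fullProd M α f) j L ≠ 0 :=
  prod_ne_zero_iff.mpr fun _ _ => hG0 _

theorem mul_modifiedRate_eq_flux_sub (hG0 : ∀ n, fullProd M α f n ≠ 0) (k : ℤ) :
    α * modifiedRate M α f k = flux M α f (k - M - 1) - flux M α f (k - M) := by
  have hk : k - M - 1 + M + 1 = k := by ring
  -- Peeling the end sites off every window leaves the windows over `k - M, …, k - 1` as
  -- common factors, and a rational identity in `g` and `G` at `k - m` and `k`.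
  rw [modifiedRate, flux, flux, window_two_mul_eq_fullProd_mul M α f, hk,
    window_two_mul_eq_trimmedProd_mul M α f, sub_add_cancel,
    window_succ' (fullProd M α f) (k - M - 1) (M + 1),
    window_succ' (fullProd M α f) (k - M - 1) M, window_succ' (trimmedProd M α f) (k - M - 1) M,
    sub_add_cancel, window_succ (fullProd M α f) (k - M) M,
    window_succ (trimmedProd M α f) (k - M) M, sub_add_cancel]
  have := window_fullProd_ne_zero hG0 (k - M) M
  have := hG0 k
  have := hG0 (k - M - 1)
  field_simp
  ring

theorem mul_sum_modifiedRate_eq_flux_sub (hG0 : ∀ n, fullProd M α f n ≠ 0) (n : ℤ) :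
    α * ∑ s ∈ range M, modifiedRate M α f (n + 1 + s) =
      flux M α f (n - M) - flux M α f n := by
  rw [mul_sum]
  convert sum_range_sub' (fun s : ℕ => flux M α f (n - M + s)) M using 1
  · refine sum_congr rfl fun s _ => ?_
    rw [mul_modifiedRate_eq_flux_sub hG0]
    push_cast
    ring_nf
  · simp

theorem window_miura (j : ℤ) (L : ℕ) :
    window (miura M α f) j L =
      window (trimmedProd M α f) j L * window f j L / window (fullProd M α f) j L := by
  simp only [window, miura, prod_div_distrib, prod_mul_distrib]

theorem miura_mul_window_left (n : ℤ) :
    miura M α f n * window (miura M α f) (n - M - 1) (M + 1) =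
      trimmedProd M α f n * window (trimmedProd M α f) (n - M - 1) (M + 1) *
        (fullProd M α f (n - M - 1) + α) /
        (fullProd M α f n * window (fullProd M α f) (n - M - 1) (M + 1)) := by
  have hn : n - M - 1 + ((M + 1 : ℕ) : ℤ) = n := by push_cast; ring
  rw [window_miura, miura, fullProd_add M α f, window_succ f (n - M - 1) (M + 1), hn]
  ring

theorem miura_mul_window_right (n : ℤ) :
    miura M α f n * window (miura M α f) (n + 1) (M + 1) =
      trimmedProd M α f n * window (trimmedProd M α f) (n + 1) (M + 1) * (fullProd M α f n + α) /
        (fullProd M α f n * window (fullProd M α f) (n + 1) (M + 1)) := by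
  rw [window_miura, miura, fullProd_add M α f, window_succ' f n (M + 1)]
  ring

theorem miura_deriv_left_eq (hG0 : ∀ n, fullProd M α f n ≠ 0) (n : ℤ) :
    f n * ((fullProd M α f n - trimmedProd M α f n) * flux M α f (n - M) -
        α * (trimmedProd M α f n * modifiedRate M α f n)) / fullProd M α f n ^ 2 =
      miura M α f n * window (miura M α f) (n - M) M -
        miura M α f n ^ 2 * window (miura M α f) (n - M - 1) (M + 1) := by
  have hinner : window f (n - M) M = trimmedProd M α f (n - M - 1) + α := by
    rw [trimmedProd_add M α f, sub_add_cancel]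
  rw [pow_two (miura M α f n), mul_assoc (miura M α f n), miura_mul_window_left, flux,
    modifiedRate, window_miura, miura, hinner, window_two_mul_eq_trimmedProd_mul M α f,
    sub_add_cancel, window_succ' (fullProd M α f) (n - M - 1) (M + 1),
    window_succ' (fullProd M α f) (n - M - 1) M, window_succ' (trimmedProd M α f) (n - M - 1) M,
    sub_add_cancel, window_succ (fullProd M α f) (n - M) M,
    window_succ (trimmedProd M α f) (n - M) M, sub_add_cancel]
  have := window_fullProd_ne_zero hG0 (n - M) M
  have := hG0 n
  have := hG0 (n - M - 1)
  field_simp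
  ring

theorem miura_deriv_right_eq (hG0 : ∀ n, fullProd M α f n ≠ 0) (n : ℤ) :
    f n * (-((fullProd M α f n - trimmedProd M α f n) * flux M α f n) -
        trimmedProd M α f n * (fullProd M α f n + α) * modifiedRate M α f (n + M + 1)) /
        fullProd M α f n ^ 2 =
      miura M α f n ^ 2 * window (miura M α f) (n + 1) (M + 1) -
        miura M α f n * window (miura M α f) (n + 1) M := by
  have h1 : n + M + 1 - M - 1 = n := by ring
  have h2 : n + M + 1 - M = n + 1 := by ring
  have h3 : n + 1 + M = n + M + 1 := by ring
  rw [pow_two (miura M α f n), mul_assoc (miura M α f n), miura_mul_window_right, flux,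
    modifiedRate, h1, h2, window_miura, miura, ← trimmedProd_add M α f n,
    window_two_mul_eq_fullProd_mul M α f, window_succ' (fullProd M α f) n (M + 1),
    window_succ' (fullProd M α f) n M, window_succ' (trimmedProd M α f) n M,
    window_succ (fullProd M α f) (n + 1) M, window_succ (trimmedProd M α f) (n + 1) M, h3]
  have := window_fullProd_ne_zero hG0 (n + 1) M
  have := hG0 n
  have := hG0 (n + M + 1)
  field_simp
  ring

theorem miura_deriv_eq (hG0 : ∀ n, fullProd M α f n ≠ 0) (n : ℤ) :
    ((((trimmedProd M α f n + α) * ∑ s ∈ range M, modifiedRate M α f (n + 1 + s)) * f n +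
          trimmedProd M α f n * (f n * modifiedRate M α f n)) * fullProd M α f n -
        trimmedProd M α f n * f n *
          ((fullProd M α f n + α) * ∑ s ∈ range (M + 2), modifiedRate M α f (n + s))) /
        fullProd M α f n ^ 2 =
      miura M α f n ^ 2 *
          (window (miura M α f) (n + 1) (M + 1) - window (miura M α f) (n - M - 1) (M + 1)) -
        miura M α f n * (window (miura M α f) (n + 1) M - window (miura M α f) (n - M) M) := by
  calc _ = f n * ((fullProd M α f n - trimmedProd M α f n) *
            (α * ∑ s ∈ range M, modifiedRate M α f (n + 1 + s)) -
          α * (trimmedProd M α f n * modifiedRate M α f n) -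
          trimmedProd M α f n * (fullProd M α f n + α) * modifiedRate M α f (n + M + 1)) /
        fullProd M α f n ^ 2 := by
        rw [sum_range_add_two_eq]
        ring
    _ = f n * ((fullProd M α f n - trimmedProd M α f n) * flux M α f (n - M) -
            α * (trimmedProd M α f n * modifiedRate M α f n)) / fullProd M α f n ^ 2 +
        f n * (-((fullProd M α f n - trimmedProd M α f n) * flux M α f n) -
            trimmedProd M α f n * (fullProd M α f n + α) * modifiedRate M α f (n + M + 1)) /
          fullProd M α f n ^ 2 := by
        rw [mul_sum_modifiedRate_eq_flux_sub hG0]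
        ring
    _ = _ := by
        rw [miura_deriv_left_eq hG0, miura_deriv_right_eq hG0]
        ring

end Lattice

section Derivative

variable {𝕜 : Type*} [NontriviallyNormedField 𝕜] [NormedAlgebra 𝕜 ℂ] {M : ℕ} {α : ℂ}
  {f : 𝕜 → ℤ → ℂ} {S : ℤ → ℂ} {x : 𝕜}

theorem hasDerivAt_trimmedProd (hf : ∀ k, HasDerivAt (f · k) (f x k * S k) x) (n : ℤ) :
    HasDerivAt (fun τ => trimmedProd M α (f τ) n)
      ((trimmedProd M α (f x) n + α) * ∑ s ∈ range M, S (n + 1 + s)) x := by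
  rw [trimmedProd_add]
  exact (hasDerivAt_window hf (n + 1) M).sub_const α

theorem hasDerivAt_fullProd (hf : ∀ k, HasDerivAt (f · k) (f x k * S k) x) (n : ℤ) :
    HasDerivAt (fun τ => fullProd M α (f τ) n)
      ((fullProd M α (f x) n + α) * ∑ s ∈ range (M + 2), S (n + s)) x := by
  rw [fullProd_add]
  exact (hasDerivAt_window hf n (M + 2)).sub_const α

theorem hasDerivAt_miura (hG0 : ∀ n, fullProd M α (f x) n ≠ 0)
    (hf : ∀ k, HasDerivAt (f · k) (f x k * modifiedRate M α (f x) k) x) (n : ℤ) :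
    HasDerivAt (fun τ => miura M α (f τ) n)
      (miura M α (f x) n ^ 2 *
          (window (miura M α (f x)) (n + 1) (M + 1) -
            window (miura M α (f x)) (n - M - 1) (M + 1)) -
        miura M α (f x) n *
          (window (miura M α (f x)) (n + 1) M - window (miura M α (f x)) (n - M) M)) x := by
  rw [← miura_deriv_eq hG0]
  exact ((hasDerivAt_trimmedProd hf n).mul (hf n)).div (hasDerivAt_fullProd hf n) (hG0 n)

end Derivative

/-- The Miura-type substitution `u = g f / G` maps solutions of the modified lattice
into solutions of the integrable discretization of the Sawada–Kotera equation. -/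
theorem miura_modified_to_dSK_first
    (m : ℕ) (hm : 1 ≤ m) (α : ℂ)
    (f : ℝ → ℤ → ℂ)
    (g G : ℝ → ℤ → ℂ)
    (hg : ∀ (t : ℝ) (n : ℤ),
      g t n = (∏ s ∈ Finset.range (m - 1), f t (n + s + 1)) - α)
    (hG : ∀ (t : ℝ) (n : ℤ),
      G t n = (∏ s ∈ Finset.range (m + 1), f t (n + s)) - α)
    (hG0 : ∀ (t : ℝ) (n : ℤ), G t n ≠ 0)
    (hf : ∀ (t : ℝ) (n : ℤ),
      HasDerivAt (fun τ => f τ n)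
        (f t n * (∏ s ∈ Finset.range (m - 1), g t (n - s - 1))
            / (∏ s ∈ Finset.range (m + 1), G t (n - s))
          * (g t n * g t (n - m) * (G t n - G t (n - m))
            - G t n * G t (n - m) * (g t n - g t (n - m)))) t)
    (u : ℝ → ℤ → ℂ)
    (hu : ∀ (t : ℝ) (n : ℤ), u t n = g t n * f t n / G t n) :
    ∀ (t : ℝ) (n : ℤ),
      HasDerivAt (fun τ => u τ n)
        (u t n ^ 2 *
            ((∏ s ∈ Finset.range m, u t (n + s + 1)) -
              ∏ s ∈ Finset.range m, u t (n - s - 1))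
          - u t n *
            ((∏ s ∈ Finset.range (m - 1), u t (n + s + 1)) -
              ∏ s ∈ Finset.range (m - 1), u t (n - s - 1))) t := by
  obtain ⟨M, rfl⟩ : ∃ M, m = M + 1 := ⟨m - 1, by omega⟩
  simp only [Nat.add_sub_cancel, Nat.cast_add, Nat.cast_one, sub_add_eq_sub_sub,
    prod_range_add_add_one_eq_window, prod_range_sub_sub_one_eq_window,
    prod_range_sub_eq_window, sub_add_cancel] at hg hG hf ⊢
  obtain rfl : g = fun t => trimmedProd M α (f t) := funext₂ hg
  obtain rfl : G = fun t => fullProd M α (f t) := funext₂ hG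
  obtain rfl : u = fun t => miura M α (f t) := funext₂ hu
  intro t n
  refine hasDerivAt_miura (hG0 t) (fun k => (hf t k).congr_deriv ?_) n
  rw [modifiedRate]
  ring
end
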